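/- arXiv:2602.22058 — 12 statements merged into one kernel-verified Lean document; each statement's English description precedes it below -/
import Mathlib

section
/- Let (x, y) ∈ P and let t be an integer with 2 ≤ t ≤ T. If y_t = 1, then there exists at most one integer j with 0 ≤ j ≤ min{t−2, L} such that y_{t−j} − y_{t−j−1} = 1. -/
/-- Membership in the single-generator unit-commitment set `P`:
`x` is the generation vector, `y` the binary on/off vector, over periods `1,…,T`. -/
def inP (T L Ldn : ℤ) (Cl Cu V Vb : ℝ) (x y : ℤ → ℝ) : Prop :=
  (∀ t : ℤ, 1 ≤ t → t ≤ T → 0 ≤ x t) ∧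
  (∀ t : ℤ, 1 ≤ t → t ≤ T → y t = 0 ∨ y t = 1) ∧
  (∀ t k : ℤ, 2 ≤ t → t ≤ T → t ≤ k → k ≤ min T (t + L - 1) →
    -y (t - 1) + y t - y k ≤ 0) ∧
  (∀ t k : ℤ, 2 ≤ t → t ≤ T → t ≤ k → k ≤ min T (t + Ldn - 1) →
    y (t - 1) - y t + y k ≤ 1) ∧
  (∀ t : ℤ, 1 ≤ t → t ≤ T → Cl * y t ≤ x t) ∧
  (∀ t : ℤ, 1 ≤ t → t ≤ T → x t ≤ Cu * y t) ∧
  (∀ t : ℤ, 2 ≤ t → t ≤ T → x t - x (t - 1) ≤ V * y (t - 1) + Vb * (1 - y (t - 1))) ∧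
  (∀ t : ℤ, 2 ≤ t → t ≤ T → x (t - 1) - x t ≤ V * y t + Vb * (1 - y t))

theorem stmt_1 (T L Ldn : ℤ) (Cl Cu V Vb : ℝ)
    (hT : 1 ≤ T) (hL : 1 ≤ L) (hLdn : 1 ≤ Ldn)
    (hCl : 0 < Cl) (hCu : Cl < Cu) (hV : 0 < V)
    (hVVb : Vb + V ≤ Cu) (hVb1 : Cl < Vb) (hVb2 : Vb < Cl + V)
    (x y : ℤ → ℝ) (hxy : inP T L Ldn Cl Cu V Vb x y)
    (t : ℤ) (ht1 : 2 ≤ t) (ht2 : t ≤ T) (hyt : y t = 1) :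
    ∀ j₁ j₂ : ℤ, 0 ≤ j₁ → j₁ ≤ min (t - 2) L → 0 ≤ j₂ → j₂ ≤ min (t - 2) L →
      y (t - j₁) - y (t - j₁ - 1) = 1 → y (t - j₂) - y (t - j₂ - 1) = 1 → j₁ = j₂ := by
  obtain ⟨-, hbin, hup, -, -, -, -, -⟩ := hxy
  have key : ∀ j₁ j₂ : ℤ, 0 ≤ j₁ → j₁ ≤ min (t - 2) L → 0 ≤ j₂ → j₂ ≤ min (t - 2) L →
      y (t - j₁) - y (t - j₁ - 1) = 1 → y (t - j₂) - y (t - j₂ - 1) = 1 → ¬ j₁ < j₂ := by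
    intro j₁ j₂ h1 h2 h3 h4 hs1 hs2 hlt
    have hj1L := le_min_iff.mp h2
    have hj2L := le_min_iff.mp h4
    have hc := hup (t - j₂) (t - j₁ - 1) (by omega) (by omega) (by omega) (by omega)
    have hb := hbin (t - j₁) (by omega) (by omega)
    rcases hb with h | h <;> linarith
  intro j₁ j₂ h1 h2 h3 h4 hs1 hs2
  rcases lt_trichotomy j₁ j₂ with h | h | h
  · exact absurd h (key j₁ j₂ h1 h2 h3 h4 hs1 hs2)
  · exact h
  · exact absurd h (key j₂ j₁ h3 h4 h1 h2 hs2 hs1)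
end

section
/- The polytope Q₂ equals the convex hull of P₂ in ℝ⁴; that is, Q₂ = conv(P₂). -/
/-!
Exchanging the two periods maps both `P₂` and `Q₂` to themselves, so it suffices to write a point
`v = (x₁, x₂, y₁, y₂)` of `Q₂` with `y₁ ≤ y₂` as a convex combination of points of `P₂`. Split
`x₂ = t + (x₂ - t)`, where `t` is the output in period 2 of the runs that were already on in
period 1; then `v = y₁ p + (y₂ - y₁) q + (1 - y₂) 0` with `p = (x₁, t, y₁, y₁) / y₁` and
`q = (0, x₂ - t, 0, y₂ - y₁) / (y₂ - y₁)`. These lie in `P₂` exactly when `t` satisfies three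
lower and three upper bounds, and each lower bound is below each upper bound by an inequality
of `Q₂` (Fourier–Motzkin elimination of `t`).
-/

/-- The two-period single-generator unit-commitment set `P₂`, as a subset of `ℝ⁴`.
Coordinates: `v 0 = x₁`, `v 1 = x₂`, `v 2 = y₁`, `v 3 = y₂`. -/
def P2 (Cl Cu V Vb : ℝ) : Set (Fin 4 → ℝ) :=
  {v | 0 ≤ v 0 ∧ 0 ≤ v 1 ∧ (v 2 = 0 ∨ v 2 = 1) ∧ (v 3 = 0 ∨ v 3 = 1) ∧
    Cl * v 2 ≤ v 0 ∧ v 0 ≤ Cu * v 2 ∧ Cl * v 3 ≤ v 1 ∧ v 1 ≤ Cu * v 3 ∧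
    v 1 - v 0 ≤ V * v 2 + Vb * (1 - v 2) ∧
    v 0 - v 1 ≤ V * v 3 + Vb * (1 - v 3)}

/-- The polytope `Q₂`, as a subset of `ℝ⁴`. -/
def Q2 (Cl Cu V Vb : ℝ) : Set (Fin 4 → ℝ) :=
  {v | v 2 ≤ 1 ∧ v 3 ≤ 1 ∧
    Cl * v 2 ≤ v 0 ∧ v 0 ≤ Cu * v 2 ∧ Cl * v 3 ≤ v 1 ∧ v 1 ≤ Cu * v 3 ∧
    v 0 ≤ Vb * v 2 + (Cu - Vb) * v 3 ∧
    v 1 ≤ (Cu - Vb) * v 2 + Vb * v 3 ∧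
    v 1 - v 0 ≤ (Cl + V) * v 3 - Cl * v 2 ∧
    v 1 - v 0 ≤ Vb * v 3 - (Vb - V) * v 2 ∧
    v 0 - v 1 ≤ (Cl + V) * v 2 - Cl * v 3 ∧
    v 0 - v 1 ≤ Vb * v 2 - (Vb - V) * v 3}

open Set

section ConvexHull

variable {E F : Type*} [AddCommGroup E] [Module ℝ E] [AddCommGroup F] [Module ℝ F]

theorem smul_add_smul_mem_convexHull {s : Set E} {x y : E} (h0 : 0 ∈ s) (hx : x ∈ s)
    (hy : y ∈ s) {a b : ℝ} (ha : 0 ≤ a) (hb : 0 ≤ b) (hab : a + b ≤ 1) :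
    a • x + b • y ∈ convexHull ℝ s := by
  have := (convex_convexHull ℝ s).sum_mem (t := Finset.univ) (w := ![a, b, 1 - a - b])
    (z := ![x, y, 0]) (by simp [Fin.forall_fin_succ, *, sub_sub, sub_nonneg])
    (by simp [Fin.sum_univ_three])
    (by simp [Fin.forall_fin_succ, subset_convexHull ℝ s hx, subset_convexHull ℝ s hy,
      subset_convexHull ℝ s h0])
  simpa [Fin.sum_univ_three] using this

theorem LinearMap.mapsTo_convexHull (f : E →ₗ[ℝ] F) {s : Set E} {t : Set F}
    (h : MapsTo f s t) : MapsTo f (convexHull ℝ s) (convexHull ℝ t) := by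
  intro x hx
  exact convexHull_mono h.image_subset (f.image_convexHull s ▸ mem_image_of_mem f hx)

end ConvexHull

variable {Cl Cu V Vb : ℝ}

theorem zero_mem_P2 (hVb : 0 ≤ Vb) : (0 : Fin 4 → ℝ) ∈ P2 Cl Cu V Vb := by
  simp [P2, hVb]

theorem exists_mem_P2_smul_eq_of_on_on (hCl : 0 ≤ Cl) (hClCu : Cl ≤ Cu) (hV : 0 ≤ V)
    {s a b : ℝ} (hs : 0 ≤ s) (ha₁ : Cl * s ≤ a) (ha₂ : a ≤ Cu * s) (hb₁ : Cl * s ≤ b)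
    (hb₂ : b ≤ Cu * s) (hab : a - b ≤ V * s) (hba : b - a ≤ V * s) :
    ∃ p ∈ P2 Cl Cu V Vb, s • p = ![a, b, s, s] := by
  rcases hs.eq_or_lt with rfl | hs
  · obtain ⟨rfl, rfl⟩ : a = 0 ∧ b = 0 := ⟨by linarith, by linarith⟩
    refine ⟨![Cl, Cl, 1, 1], by simp [P2, hCl, hClCu, hV], ?_⟩
    ext i; fin_cases i <;> simp
  · refine ⟨![a / s, b / s, 1, 1], ?_, ?_⟩
    · have := mul_nonneg hCl hs.le
      simp only [P2, mem_ofPred_eq, Matrix.cons_val, mul_one, sub_self, mul_zero, add_zero,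
        or_true, true_and]
      field_simp
      refine ⟨?_, ?_, ?_, ?_, ?_, ?_, ?_, ?_⟩ <;> linarith
    · ext i; fin_cases i <;> simp [mul_div_cancel₀ _ hs.ne']

theorem exists_mem_P2_smul_eq_of_off_on (hCl : 0 ≤ Cl) (hClVb : Cl ≤ Vb) (hVbCu : Vb ≤ Cu)
    (hV : 0 ≤ V) {s b : ℝ} (hs : 0 ≤ s) (hb₁ : Cl * s ≤ b) (hb₂ : b ≤ Vb * s) :
    ∃ p ∈ P2 Cl Cu V Vb, s • p = ![0, b, 0, s] := by
  rcases hs.eq_or_lt with rfl | hs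
  · refine ⟨![0, Cl, 0, 1], ?_, ?_⟩
    · simp only [P2, mem_ofPred_eq, Matrix.cons_val, mul_one, sub_self, mul_zero, add_zero,
        sub_zero, zero_sub, le_refl, or_true, true_or, true_and]
      refine ⟨?_, ?_, ?_, ?_⟩ <;> linarith
    · obtain rfl : b = 0 := by linarith
      ext i; fin_cases i <;> simp
  · refine ⟨![0, b / s, 0, 1], ?_, ?_⟩
    · have := mul_nonneg hCl hs.le
      have := mul_nonneg hV hs.le
      have := mul_le_mul_of_nonneg_right hVbCu hs.le
      simp only [P2, mem_ofPred_eq, Matrix.cons_val, mul_one, sub_self, mul_zero, add_zero,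
        sub_zero, zero_add, le_refl, or_true, true_or, true_and]
      field_simp
      refine ⟨?_, ?_, ?_, ?_, ?_⟩ <;> linarith
    · ext i; fin_cases i <;> simp [mul_div_cancel₀ _ hs.ne']

theorem nonneg_two_of_mem_Q2 (hClCu : Cl < Cu) {v : Fin 4 → ℝ} (hv : v ∈ Q2 Cl Cu V Vb) :
    0 ≤ v 2 := by
  obtain ⟨-, -, h₁, h₂, -⟩ := hv
  nlinarith

theorem exists_split_of_mem_Q2 (hClCu : Cl < Cu) (hV : 0 ≤ V) (hClVb : Cl ≤ Vb)
    {v : Fin 4 → ℝ} (hv : v ∈ Q2 Cl Cu V Vb) (hle : v 2 ≤ v 3) :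
    ∃ t, Cl * v 2 ≤ t ∧ t ≤ Cu * v 2 ∧ v 0 - V * v 2 ≤ t ∧ t ≤ v 0 + V * v 2 ∧
      v 1 - Vb * (v 3 - v 2) ≤ t ∧ t ≤ v 1 - Cl * (v 3 - v 2) := by
  have hy₁ := nonneg_two_of_mem_Q2 hClCu hv
  obtain ⟨-, -, h₁, h₂, h₃, -, -, h₈, -, h₁₀, h₁₁, -⟩ := hv
  have := mul_nonneg hV hy₁
  have := mul_le_mul_of_nonneg_right hClVb (sub_nonneg.2 hle)
  refine ⟨max (max (Cl * v 2) (v 0 - V * v 2)) (v 1 - Vb * (v 3 - v 2)),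
    le_max_of_le_left (le_max_left _ _), ?_, le_max_of_le_left (le_max_right _ _), ?_,
    le_max_right _ _, ?_⟩ <;>
  exact max_le (max_le (by linarith) (by linarith)) (by linarith)

theorem mem_convexHull_P2_of_mem_Q2_of_le (hCl : 0 ≤ Cl) (hClCu : Cl < Cu) (hV : 0 ≤ V)
    (hVbCu : Vb + V ≤ Cu) (hClVb : Cl ≤ Vb) {v : Fin 4 → ℝ} (hv : v ∈ Q2 Cl Cu V Vb)
    (hle : v 2 ≤ v 3) : v ∈ convexHull ℝ (P2 Cl Cu V Vb) := by
  have hy₁ := nonneg_two_of_mem_Q2 hClCu hv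
  obtain ⟨t, ht₁, ht₂, ht₃, ht₄, ht₅, ht₆⟩ := exists_split_of_mem_Q2 hClCu hV hClVb hv hle
  obtain ⟨-, hy₂, hx₁_lo, hx₁_hi, -⟩ := hv
  obtain ⟨p, hp, hpv⟩ := exists_mem_P2_smul_eq_of_on_on (Vb := Vb) hCl hClCu.le hV hy₁
    hx₁_lo hx₁_hi ht₁ ht₂ (by linarith) (by linarith)
  obtain ⟨q, hq, hqv⟩ := exists_mem_P2_smul_eq_of_off_on hCl hClVb (by linarith : Vb ≤ Cu) hV
    (sub_nonneg.2 hle) (b := v 1 - t) (by linarith) (by linarith)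
  have hv : v = v 2 • p + (v 3 - v 2) • q := by
    rw [hpv, hqv]; ext i; fin_cases i <;> simp
  exact hv ▸ smul_add_smul_mem_convexHull (zero_mem_P2 (hCl.trans hClVb)) hp hq hy₁
    (sub_nonneg.2 hle) (by linarith)

def swapPeriods : (Fin 4 → ℝ) →ₗ[ℝ] (Fin 4 → ℝ) := LinearMap.funLeft ℝ ℝ ![1, 0, 3, 2]

@[simp]
theorem swapPeriods_apply (v : Fin 4 → ℝ) : swapPeriods v = ![v 1, v 0, v 3, v 2] := by
  ext i; fin_cases i <;> rfl

theorem swapPeriods_swapPeriods (v : Fin 4 → ℝ) : swapPeriods (swapPeriods v) = v := by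
  ext i; fin_cases i <;> rfl

theorem mapsTo_swapPeriods_P2 : MapsTo swapPeriods (P2 Cl Cu V Vb) (P2 Cl Cu V Vb) := by
  rintro v ⟨h₀, h₁, h₂, h₃, h₄, h₅, h₆, h₇, h₈, h₉⟩
  simp only [P2, mem_ofPred_eq, swapPeriods_apply, Matrix.cons_val]
  exact ⟨h₁, h₀, h₃, h₂, h₆, h₇, h₄, h₅, h₉, h₈⟩

theorem mapsTo_swapPeriods_Q2 : MapsTo swapPeriods (Q2 Cl Cu V Vb) (Q2 Cl Cu V Vb) := by
  intro v hv
  simp only [Q2, mem_ofPred_eq, swapPeriods_apply, Matrix.cons_val] at hv ⊢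
  refine ⟨?_, ?_, ?_, ?_, ?_, ?_, ?_, ?_, ?_, ?_, ?_, ?_⟩ <;> linarith

theorem P2_subset_Q2 (hVbCu : Vb + V ≤ Cu) (hClVb : Cl < Vb) (hVb : Vb < Cl + V) :
    P2 Cl Cu V Vb ⊆ Q2 Cl Cu V Vb := by
  rintro v ⟨-, -, hy₁ | hy₁, hy₂ | hy₂, h⟩ <;>
  · simp only [Q2, mem_ofPred_eq, hy₁, hy₂] at h ⊢
    refine ⟨?_, ?_, ?_, ?_, ?_, ?_, ?_, ?_, ?_, ?_, ?_, ?_⟩ <;> linarith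

theorem convex_Q2 : Convex ℝ (Q2 Cl Cu V Vb) := by
  intro u hu w hw a b ha hb hab
  simp only [Q2, mem_ofPred_eq] at hu hw ⊢
  simp only [Pi.add_apply, Pi.smul_apply, smul_eq_mul]
  obtain rfl : b = 1 - a := by linarith
  refine ⟨?_, ?_, ?_, ?_, ?_, ?_, ?_, ?_, ?_, ?_, ?_, ?_⟩ <;> nlinarith

theorem Q2_subset_convexHull_P2 (hCl : 0 ≤ Cl) (hClCu : Cl < Cu) (hV : 0 ≤ V)
    (hVbCu : Vb + V ≤ Cu) (hClVb : Cl ≤ Vb) : Q2 Cl Cu V Vb ⊆ convexHull ℝ (P2 Cl Cu V Vb) := by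
  intro v hv
  rcases le_total (v 2) (v 3) with hle | hle
  · exact mem_convexHull_P2_of_mem_Q2_of_le hCl hClCu hV hVbCu hClVb hv hle
  · rw [← swapPeriods_swapPeriods v]
    refine swapPeriods.mapsTo_convexHull mapsTo_swapPeriods_P2 ?_
    exact mem_convexHull_P2_of_mem_Q2_of_le hCl hClCu hV hVbCu hClVb
      (mapsTo_swapPeriods_Q2 hv) (by simpa using hle)

theorem stmt_3 (Cl Cu V Vb : ℝ)
    (hCl : 0 < Cl) (hCu : Cl < Cu) (hV : 0 < V)
    (hVVb : Vb + V ≤ Cu) (hVb1 : Cl < Vb) (hVb2 : Vb < Cl + V) :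
    Q2 Cl Cu V Vb = convexHull ℝ (P2 Cl Cu V Vb) :=
  (Q2_subset_convexHull_P2 hCl.le hCu hV.le hVVb hVb1.le).antisymm
    (convexHull_min (P2_subset_Q2 hVVb hVb1 hVb2) convex_Q2)
end

section
/- For any integer k with 1 ≤ k ≤ T−1 and any integer t with k+1 ≤ t ≤ T, every (x, y) ∈ P satisfies x_t − x_{t−k} ≤ (C_ + k·V)·y_t − C_·y_{t−k}. -/
variable {T L Ldn : ℤ} {Cl Cu V Vb : ℝ} {x y : ℤ → ℝ}

lemma inP.x_sub_x_pred_le (h : inP T L Ldn Cl Cu V Vb x y) (hV : 0 ≤ V) (hVb : Vb ≤ Cl + V)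
    {s : ℤ} (hs2 : 2 ≤ s) (hsT : s ≤ T) :
    x s - x (s - 1) ≤ Cl * (y s - y (s - 1)) + V := by
  obtain ⟨-, hy01, -, -, hlo, hhi, hup, -⟩ := h
  have hramp := hup s hs2 hsT
  have hlo_pred := hlo (s - 1) (by linarith) (by linarith)
  have hhi_s := hhi s (by linarith) hsT
  rcases hy01 s (by linarith) hsT with hs | hs <;>
    rcases hy01 (s - 1) (by linarith) (by linarith) with hp | hp <;>
    simp only [hs, hp] at hramp hlo_pred hhi_s ⊢ <;>
    linarith

lemma inP.x_sub_x_sub_le (h : inP T L Ldn Cl Cu V Vb x y) (hV : 0 ≤ V) (hVb : Vb ≤ Cl + V)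
    {k : ℤ} (hk : 0 ≤ k) {t : ℤ} (ht1 : k + 1 ≤ t) (htT : t ≤ T) :
    x t - x (t - k) ≤ Cl * (y t - y (t - k)) + k * V := by
  induction k, hk using Int.leInduction with
  | base => simp
  | succ k hk ih =>
    have hstep := h.x_sub_x_pred_le hV hVb (s := t - k) (by linarith) (by linarith)
    rw [show t - (k + 1) = t - k - 1 by ring]
    push_cast
    linarith [ih (by linarith)]

theorem stmt_4_general (T L Ldn : ℤ) (Cl Cu V Vb : ℝ)
    (hV : 0 < V)
    (hVb2 : Vb < Cl + V)
    (k : ℤ) (hk1 : 1 ≤ k)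
    (t : ℤ) (ht1 : k + 1 ≤ t) (ht2 : t ≤ T)
    (x y : ℤ → ℝ) (hxy : inP T L Ldn Cl Cu V Vb x y) :
    x t - x (t - k) ≤ (Cl + (k : ℝ) * V) * y t - Cl * y (t - k) := by
  have htelescope := hxy.x_sub_x_sub_le hV.le hVb2.le (by linarith) ht1 ht2
  obtain ⟨-, hy01, -, -, hlo, hhi, -, -⟩ := hxy
  have hlo_tk := hlo (t - k) (by linarith) (by linarith)
  have hhi_t := hhi t (by linarith) ht2
  rcases hy01 t (by linarith) ht2 with hyt | hyt <;>
    simp only [hyt] at htelescope hhi_t ⊢ <;>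
    linarith

theorem stmt_4 (T L Ldn : ℤ) (Cl Cu V Vb : ℝ)
    (hT : 1 ≤ T) (hL : 1 ≤ L) (hLdn : 1 ≤ Ldn)
    (hCl : 0 < Cl) (hCu : Cl < Cu) (hV : 0 < V)
    (hVVb : Vb + V ≤ Cu) (hVb1 : Cl < Vb) (hVb2 : Vb < Cl + V)
    (k : ℤ) (hk1 : 1 ≤ k) (hk2 : k ≤ T - 1)
    (t : ℤ) (ht1 : k + 1 ≤ t) (ht2 : t ≤ T)
    (x y : ℤ → ℝ) (hxy : inP T L Ldn Cl Cu V Vb x y) :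
    x t - x (t - k) ≤ (Cl + (k : ℝ) * V) * y t - Cl * y (t - k) :=
  stmt_4_general T L Ldn Cl Cu V Vb hV hVb2 k hk1 t ht1 ht2 x y hxy
end

section
/- Let S be a finite set of integers with S ⊆ [0, min{L−1, T−2, ⌊(C̄−V̄)/V⌋}], and let t be an integer with 1 ≤ t ≤ T such that t ≥ s+2 for all s ∈ S. Then every (x, y) ∈ P satisfies x_t ≤ C̄·y_t − Σ_{s∈S} (C̄ − V̄ − s·V)·(y_{t−s} − y_{t−s−1}). -/
theorem stmt_5 (T L Ldn : ℤ) (Cl Cu V Vb : ℝ)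
    (hT : 1 ≤ T) (hL : 1 ≤ L) (hLdn : 1 ≤ Ldn)
    (hCl : 0 < Cl) (hCu : Cl < Cu) (hV : 0 < V)
    (hVVb : Vb + V ≤ Cu) (hVb1 : Cl < Vb) (hVb2 : Vb < Cl + V)
    (S : Finset ℤ)
    (hS : S ⊆ Finset.Icc 0 (min (min (L - 1) (T - 2)) ⌊(Cu - Vb) / V⌋))
    (t : ℤ) (ht1 : 1 ≤ t) (ht2 : t ≤ T) (htS : ∀ s ∈ S, s + 2 ≤ t)
    (x y : ℤ → ℝ) (hxy : inP T L Ldn Cl Cu V Vb x y) :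
    x t ≤ Cu * y t - ∑ s ∈ S, (Cu - Vb - (s : ℝ) * V) * (y (t - s) - y (t - s - 1)) := by
  obtain ⟨hx0, hybin, hup, hdn, hclo, hchi, hru, hrd⟩ := hxy
  -- facts about members of S
  have hSfacts : ∀ s ∈ S, 0 ≤ s ∧ s ≤ L - 1 ∧ s ≤ T - 2 ∧ (s : ℝ) * V ≤ Cu - Vb := by
    intro s hs
    have h := hS hs
    simp only [Finset.mem_Icc, le_min_iff] at h
    refine ⟨h.1, h.2.1.1, h.2.1.2, ?_⟩
    have : (s : ℝ) ≤ (Cu - Vb) / V := Int.le_floor.mp h.2.2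
    exact (le_div_iff₀ hV).mp this
  -- coefficients nonneg
  have hcoef : ∀ s ∈ S, 0 ≤ Cu - Vb - (s : ℝ) * V := by
    intro s hs
    have := (hSfacts s hs).2.2.2
    linarith
  -- startup propagation
  have hstartup : ∀ u : ℤ, 2 ≤ u → u ≤ T → y (u - 1) = 0 → y u = 1 →
      ∀ k : ℤ, u ≤ k → k ≤ T → k ≤ u + L - 1 → y k = 1 := by
    intro u hu2 huT h0 h1 k hk1 hk2 hk3
    have h := hup u k hu2 huT hk1 (le_min hk2 hk3)
    rw [h0, h1] at h
    rcases hybin k (by omega) hk2 with h' | h'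
    · rw [h'] at h; norm_num at h
    · exact h'
  by_cases hstart : ∃ s ∈ S, y (t - s) = 1 ∧ y (t - s - 1) = 0
  · obtain ⟨s0, hs0S, hy1, hy0⟩ := hstart
    obtain ⟨hs00, hs0L, hs0T, hs0V⟩ := hSfacts s0 hs0S
    have hts0 : s0 + 2 ≤ t := htS s0 hs0S
    -- y t = 1
    have hyt : y t = 1 := by
      refine hstartup (t - s0) (by omega) (by omega) ?_ hy1 t (by omega) ht2 (by omega)
      have : t - s0 - 1 = t - s0 - 1 := rfl
      exact hy0
    -- the sum is at most the s0-coefficient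
    have hsum : ∑ s ∈ S, (Cu - Vb - (s : ℝ) * V) * (y (t - s) - y (t - s - 1))
        ≤ Cu - Vb - (s0 : ℝ) * V := by
      rw [← Finset.add_sum_erase S _ hs0S, hy1, hy0]
      have herase : ∑ s ∈ S.erase s0, (Cu - Vb - (s : ℝ) * V) * (y (t - s) - y (t - s - 1)) ≤ 0 := by
        apply Finset.sum_nonpos
        intro s hs
        have hsS : s ∈ S := Finset.mem_of_mem_erase hs
        have hne : s ≠ s0 := Finset.ne_of_mem_erase hs
        obtain ⟨hs0', hsL, hsT, hsV⟩ := hSfacts s hsS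
        have hts : s + 2 ≤ t := htS s hsS
        apply mul_nonpos_of_nonneg_of_nonpos (hcoef s hsS)
        rcases lt_or_gt_of_ne hne with hlt | hgt
        · -- s < s0 : both values are 1
      
          have ha : y (t - s) = 1 :=
            hstartup (t - s0) (by omega) (by omega) hy0 hy1 (t - s) (by omega) (by omega) (by omega)
          have hb : y (t - s - 1) = 1 :=
            hstartup (t - s0) (by omega) (by omega) hy0 hy1 (t - s - 1) (by omega) (by omega) (by omega)
          rw [ha, hb]; norm_num
        · -- s > s0 : no startup possible at t - s
          have hnos : ¬ (y (t - s) = 1 ∧ y (t - s - 1) = 0) := by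
            rintro ⟨ha, hb⟩
            have : y (t - s0 - 1) = 1 :=
              hstartup (t - s) (by omega) (by omega) hb ha (t - s0 - 1) (by omega) (by omega) (by omega)
            rw [this] at hy0; norm_num at hy0
          rcases hybin (t - s) (by omega) (by omega) with h1 | h1 <;>
            rcases hybin (t - s - 1) (by omega) (by omega) with h2 | h2 <;>
            rw [h1, h2] <;> norm_num
          exact hnos ⟨h1, h2⟩
      linarith
    -- ramping bound: x (t - s0 + j) ≤ Vb + j V for 0 ≤ j ≤ s0
    have hbase : x (t - s0) ≤ Vb := by
      have h1 := hru (t - s0) (by omega) (by omega)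
      have h2 := hchi (t - s0 - 1) (by omega) (by omega)
      have h3 := hx0 (t - s0 - 1) (by omega) (by omega)
      rw [hy0] at h1 h2
      norm_num at h1 h2
      have hx1 : x (t - s0 - 1) = 0 := le_antisymm h2 h3
      rw [hx1] at h1
      linarith
    have hchain : ∀ j : ℤ, 0 ≤ j → j ≤ s0 → x (t - s0 + j) ≤ Vb + (j : ℝ) * V := by
      have key : ∀ j : ℤ, 0 ≤ j → j ≤ s0 → x (t - s0 + j) ≤ Vb + (j : ℝ) * V := by
        refine Int.le_induction ?_ ?_
        · intro _; simpa using hbase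
        · intro j hj0 ih hjs
          have hy' : y (t - s0 + j) = 1 :=
            hstartup (t - s0) (by omega) (by omega) hy0 hy1 (t - s0 + j) (by omega) (by omega) (by omega)
          have h1 := hru (t - s0 + j + 1) (by omega) (by omega)
          have heq : t - s0 + j + 1 - 1 = t - s0 + j := by ring
          rw [heq, hy'] at h1
          have := ih (by omega)
          have : x (t - s0 + (j + 1)) ≤ Vb + (j : ℝ) * V + V := by
            have heq2 : t - s0 + (j + 1) = t - s0 + j + 1 := by ring
            rw [heq2]
            norm_num at h1
            linarith
          push_cast
          linarith
      exact key
    have hxt : x t ≤ Vb + (s0 : ℝ) * V := by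
      have := hchain s0 hs00 le_rfl
      have heq : t - s0 + s0 = t := by ring
      rwa [heq] at this
    rw [hyt]
    linarith
  · -- no startup in the window: every term is nonpositive
    push_neg at hstart
    have hsum : ∑ s ∈ S, (Cu - Vb - (s : ℝ) * V) * (y (t - s) - y (t - s - 1)) ≤ 0 := by
      apply Finset.sum_nonpos
      intro s hs
      obtain ⟨hs0', hsL, hsT, hsV⟩ := hSfacts s hs
      have hts : s + 2 ≤ t := htS s hs
      apply mul_nonpos_of_nonneg_of_nonpos (hcoef s hs)
      rcases hybin (t - s) (by omega) (by omega) with h1 | h1 <;>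
        rcases hybin (t - s - 1) (by omega) (by omega) with h2 | h2 <;>
        rw [h1, h2] <;> norm_num
      exact hstart s hs h1 h2
    have := hchi t ht1 ht2
    linarith
end

section
/- Let S be a finite set of integers with S ⊆ [0, min{L−1, T−2, ⌊(C̄−V̄)/V⌋}], and let t be an integer with 1 ≤ t ≤ T such that t ≤ T−s−1 for all s ∈ S. Then every (x, y) ∈ P satisfies x_t ≤ C̄·y_t − Σ_{s∈S} (C̄ − V̄ − s·V)·(y_{t+s} − y_{t+s+1}). -/
/-- Discrete intermediate value: if `y a = 0` and `y (a+n) = 1` with binary values in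
between, there is a "startup" time `v`. -/
lemma exists_startup (y : ℤ → ℝ) (a : ℤ) :
    ∀ n : ℕ, y a = 0 → y (a + n) = 1 →
    (∀ u, a < u → u ≤ a + n → y u = 0 ∨ y u = 1) →
    ∃ v, a < v ∧ v ≤ a + n ∧ y (v - 1) = 0 ∧ y v = 1 := by
  intro n
  induction n with
  | zero =>
    intro h0 h1 _
    simp only [Nat.cast_zero, add_zero] at h1
    rw [h0] at h1; norm_num at h1
  | succ m ih =>
    intro h0 h1 hbin
    have hbinm : y (a + (m : ℤ)) = 0 ∨ y (a + (m : ℤ)) = 1 := by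
      by_cases hm0 : (m : ℤ) = 0
      · left; rw [hm0, add_zero]; exact h0
      · exact hbin _ (by omega) (by push_cast; omega)
    rcases hbinm with h | h
    · refine ⟨a + m + 1, by omega, by push_cast; omega, ?_, ?_⟩
      · simpa using h
      · have : a + ((m + 1 : ℕ) : ℤ) = a + m + 1 := by push_cast; ring
        rwa [this] at h1
    · obtain ⟨v, hv1, hv2, hv3, hv4⟩ := ih h0 h
        (fun u hu1 hu2 => hbin u hu1 (by push_cast; omega))
      exact ⟨v, hv1, by push_cast; omega, hv3, hv4⟩

/-- Telescoping ramp bound. -/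
lemma telescope_ramp (x : ℤ → ℝ) (V : ℝ) (t : ℤ) :
    ∀ n : ℕ, (∀ u, t ≤ u → u < t + n → x u - x (u + 1) ≤ V) →
    x t ≤ x (t + n) + n * V := by
  intro n
  induction n with
  | zero => intro _; simp
  | succ m ih =>
    intro h
    have h1 : x t ≤ x (t + m) + m * V :=
      ih (fun u hu1 hu2 => h u hu1 (by push_cast; omega))
    have h2 : x (t + m) - x (t + m + 1) ≤ V :=
      h (t + m) (by omega) (by push_cast; omega)
    have he : t + ((m + 1 : ℕ) : ℤ) = t + m + 1 := by push_cast; ring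
    rw [he]
    push_cast
    linarith

theorem stmt_6 (T L Ldn : ℤ) (Cl Cu V Vb : ℝ)
    (hT : 1 ≤ T) (hL : 1 ≤ L) (hLdn : 1 ≤ Ldn)
    (hCl : 0 < Cl) (hCu : Cl < Cu) (hV : 0 < V)
    (hVVb : Vb + V ≤ Cu) (hVb1 : Cl < Vb) (hVb2 : Vb < Cl + V)
    (S : Finset ℤ)
    (hS : S ⊆ Finset.Icc 0 (min (min (L - 1) (T - 2)) ⌊(Cu - Vb) / V⌋))
    (t : ℤ) (ht1 : 1 ≤ t) (ht2 : t ≤ T) (htS : ∀ s ∈ S, t ≤ T - s - 1)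
    (x y : ℤ → ℝ) (hxy : inP T L Ldn Cl Cu V Vb x y) :
    x t ≤ Cu * y t - ∑ s ∈ S, (Cu - Vb - (s : ℝ) * V) * (y (t + s) - y (t + s + 1)) := by
  obtain ⟨hpos, hbin, hup, hdn, hlo, hhi, hru, hrd⟩ := hxy
  -- basic facts about elements of S
  have hSfact : ∀ s ∈ S, 0 ≤ s ∧ s ≤ L - 1 ∧ t + s + 1 ≤ T ∧ 0 ≤ Cu - Vb - (s : ℝ) * V := by
    intro s hs
    have h := Finset.mem_Icc.mp (hS hs)
    have h1 : s ≤ min (min (L - 1) (T - 2)) ⌊(Cu - Vb) / V⌋ := h.2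
    have hL1 : s ≤ L - 1 := le_trans h1 (le_trans (min_le_left _ _) (min_le_left _ _))
    have hfl : s ≤ ⌊(Cu - Vb) / V⌋ := le_trans h1 (min_le_right _ _)
    have hre : (s : ℝ) ≤ (Cu - Vb) / V := Int.le_floor.mp hfl
    have : (s : ℝ) * V ≤ Cu - Vb := by
      rw [div_eq_mul_inv] at hre
      calc (s : ℝ) * V ≤ ((Cu - Vb) * V⁻¹) * V := by nlinarith
        _ = Cu - Vb := by field_simp
    exact ⟨h.1, hL1, by have := htS s hs; omega, by linarith⟩
  -- persistence: a startup in (u, t+s] forces y (t+s+1) = 1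
  have key : ∀ s ∈ S, y (t + s) = 1 → ∀ u, t ≤ u → u ≤ t + s → y u = 0 → y (t + s + 1) = 1 := by
    intro s hs h1 u hu1 hu2 hu0
    obtain ⟨hs0, hsL, hsT, -⟩ := hSfact s hs
    have hune : u ≠ t + s := by rintro rfl; rw [hu0] at h1; norm_num at h1
    have hult : u < t + s := lt_of_le_of_ne hu2 hune
    have hcast : u + ((t + s - u).toNat : ℤ) = t + s := by omega
    obtain ⟨v, hv1, hv2, hv3, hv4⟩ := exists_startup y u (t + s - u).toNat hu0
      (by rw [hcast]; exact h1)
      (by intro w hw1 hw2; exact hbin w (by omega) (by rw [hcast] at hw2; omega))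
    rw [hcast] at hv2
    have hcon := hup v (t + s + 1) (by omega) (by omega) (by omega)
      (by rw [le_min_iff]; omega)
    rw [hv3, hv4] at hcon
    have hb := hbin (t + s + 1) (by omega) (by omega)
    rcases hb with hb | hb
    · rw [hb] at hcon; norm_num at hcon
    · exact hb
  have hbyt := hbin t ht1 ht2
  rcases hbyt with h0 | h1
  · -- y t = 0, so x t = 0 and every term of the sum is ≤ 0
    have hxt0 : x t = 0 := by
      have h := hhi t ht1 ht2
      rw [h0] at h
      have := hpos t ht1 ht2
      linarith
    have hsum : ∑ s ∈ S, (Cu - Vb - (s : ℝ) * V) * (y (t + s) - y (t + s + 1)) ≤ 0 := by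
      apply Finset.sum_nonpos
      intro s hs
      obtain ⟨hs0, hsL, hsT, hcoef⟩ := hSfact s hs
      apply mul_nonpos_of_nonneg_of_nonpos hcoef
      rcases hbin (t + s) (by omega) (by omega) with hy | hy
      · have hb := hbin (t + s + 1) (by omega) (by omega)
        rcases hb with hb | hb <;> rw [hy, hb] <;> norm_num
      · have := key s hs hy t le_rfl (by omega) h0
        rw [hy, this]; norm_num
    rw [hxt0, h0]
    linarith
  · -- y t = 1
    by_cases hex : ∃ s ∈ S, y (t + s) = 1 ∧ y (t + s + 1) = 0
    · obtain ⟨s₀, hs₀, hy1, hy0⟩ := hex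
      obtain ⟨hs₀0, hs₀L, hs₀T, hcoef₀⟩ := hSfact s₀ hs₀
      -- all other terms are ≤ 0
      have hterm : ∀ s ∈ S.erase s₀,
          (Cu - Vb - (s : ℝ) * V) * (y (t + s) - y (t + s + 1)) ≤ 0 := by
        intro s hs'
        have hne := Finset.ne_of_mem_erase hs'
        have hs := Finset.mem_of_mem_erase hs'
        obtain ⟨hs0, hsL, hsT, hcoef⟩ := hSfact s hs
        apply mul_nonpos_of_nonneg_of_nonpos hcoef
        rcases hbin (t + s) (by omega) (by omega) with hy | hy
        · have hb := hbin (t + s + 1) (by omega) (by omega)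
          rcases hb with hb | hb <;> rw [hy, hb] <;> norm_num
        · rcases hbin (t + s + 1) (by omega) (by omega) with hb | hb
          · -- shutdown at both s and s₀ : contradiction
            exfalso
            rcases lt_or_gt_of_ne (fun h : s = s₀ => hne h) with hlt | hgt
            · -- s < s₀ : y (t+s+1) = 0 with t ≤ t+s+1 ≤ t+s₀
              have := key s₀ hs₀ hy1 (t + s + 1) (by omega) (by omega) hb
              rw [this] at hy0; norm_num at hy0
            · -- s₀ < s
              have := key s hs hy (t + s₀ + 1) (by omega) (by omega) hy0
              rw [this] at hb; norm_num at hb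
          · rw [hy, hb]; norm_num
      have hsum : ∑ s ∈ S, (Cu - Vb - (s : ℝ) * V) * (y (t + s) - y (t + s + 1)) ≤
          Cu - Vb - (s₀ : ℝ) * V := by
        rw [← Finset.add_sum_erase S _ hs₀]
        have := Finset.sum_nonpos hterm
        rw [hy1, hy0]
        nlinarith [Finset.sum_nonpos hterm]
      -- now show x t ≤ Vb + s₀ * V
      have hyall : ∀ u, t ≤ u → u ≤ t + s₀ → y u = 1 := by
        intro u hu1 hu2
        rcases hbin u (by omega) (by omega) with h | h
        · exfalso
          have := key s₀ hs₀ hy1 u hu1 hu2 h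
          rw [this] at hy0; norm_num at hy0
        · exact h
      have hxlast : x (t + s₀ + 1) = 0 := by
        have h := hhi (t + s₀ + 1) (by omega) (by omega)
        rw [hy0] at h
        have := hpos (t + s₀ + 1) (by omega) (by omega)
        linarith
      have hstep_last : x (t + s₀) ≤ Vb := by
        have h := hrd (t + s₀ + 1) (by omega) (by omega)
        have he : t + s₀ + 1 - 1 = t + s₀ := by ring
        rw [he, hy0, hxlast] at h
        linarith
      have htel : x t ≤ x (t + s₀) + (s₀ : ℝ) * V := by
        have hc : t + (s₀.toNat : ℤ) = t + s₀ := by omega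
        have := telescope_ramp x V t s₀.toNat (by
          intro u hu1 hu2
          rw [hc] at hu2
          have h := hrd (u + 1) (by omega) (by omega)
          have he : u + 1 - 1 = u := by ring
          rw [he, hyall (u + 1) (by omega) (by omega)] at h
          linarith)
        rw [hc] at this
        have : x t ≤ x (t + s₀) + (s₀.toNat : ℝ) * V := this
        have hcast : ((s₀.toNat : ℤ) : ℝ) = (s₀ : ℝ) := by
          norm_cast; omega
        push_cast at this ⊢
        rw [show ((s₀.toNat : ℕ) : ℝ) = ((s₀.toNat : ℤ) : ℝ) by norm_cast] at this
        rw [hcast] at this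
        exact this
      rw [h1]
      linarith
    · push_neg at hex
      have hsum : ∑ s ∈ S, (Cu - Vb - (s : ℝ) * V) * (y (t + s) - y (t + s + 1)) ≤ 0 := by
        apply Finset.sum_nonpos
        intro s hs
        obtain ⟨hs0, hsL, hsT, hcoef⟩ := hSfact s hs
        apply mul_nonpos_of_nonneg_of_nonpos hcoef
        rcases hbin (t + s) (by omega) (by omega) with hy | hy
        · have hb := hbin (t + s + 1) (by omega) (by omega)
          rcases hb with hb | hb <;> rw [hy, hb] <;> norm_num
        · rcases hbin (t + s + 1) (by omega) (by omega) with hb | hb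
          · exact absurd hb (hex s hs hy)
          · rw [hy, hb]; norm_num
      have hxle : x t ≤ Cu := by
        have h := hhi t ht1 ht2
        rw [h1] at h; linarith
      rw [h1]
      linarith
end

section
/- Let S be a finite set of integers with S ⊆ [0, min{L−1, T−2, ⌊(C̄−V̄)/V⌋}], and let t be an integer with 1 ≤ t ≤ T such that t ≥ s+2 for all s ∈ S. Then there exist 2T affinely independent points of P (viewed as vectors in ℝ^{2T} by concatenating x and y) that each satisfy the inequality x_t ≤ C̄·y_t − Σ_{s∈S} (C̄ − V̄ − s·V)·(y_{t−s} − y_{t−s−1}) with equality; hence this inequality is facet-defining for conv(P). -/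
/-- View a pair `(x, y)` as a vector in `ℝ^T × ℝ^T ≃ ℝ^{2T}` by restricting to
the periods `1,…,T` (index `j : Fin T.toNat` corresponds to period `j + 1`). -/
def embed (T : ℤ) (p : (ℤ → ℝ) × (ℤ → ℝ)) :
    (Fin T.toNat → ℝ) × (Fin T.toNat → ℝ) :=
  (fun j => p.1 (((j : ℕ) : ℤ) + 1), fun j => p.2 (((j : ℕ) : ℤ) + 1))


/-- all-ones commitment vector -/
def yOne : ℤ → ℝ := fun _ => 1
/-- step-up commitment: on from period `k` onwards -/
def yUp (k : ℤ) : ℤ → ℝ := fun i => if k ≤ i then 1 else 0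
/-- step-down commitment: on for periods `≤ k - 1` -/
def yDn (k : ℤ) : ℤ → ℝ := fun i => if i ≤ k - 1 then 1 else 0
/-- generation for step-up pattern -/
def xUp (Cu V Vb : ℝ) (k : ℤ) : ℤ → ℝ :=
  fun i => if k ≤ i then min (Vb + ((i - k : ℤ) : ℝ) * V) Cu else 0
/-- generation for step-down pattern -/
def xDn (Vb : ℝ) (k : ℤ) : ℤ → ℝ := fun i => if i ≤ k - 1 then Vb else 0
/-- perturbed full generation -/
def xPert (Cu e : ℝ) (j : ℤ) : ℤ → ℝ := fun i => if i = j then Cu - e else Cu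

lemma min_add_sub (a b V : ℝ) (hV : 0 ≤ V) : min (a + V) b - min a b ≤ V := by
  rcases min_cases (a + V) b with ⟨h1, h2⟩ | ⟨h1, h2⟩ <;>
  rcases min_cases a b with ⟨h3, h4⟩ | ⟨h3, h4⟩ <;> linarith

set_option linter.unusedSectionVars false
set_option linter.unusedVariables false
set_option linter.unreachableTactic false
set_option linter.unusedTactic false
set_option linter.unnecessarySeqFocus false

section lems
variable {T L Ldn : ℤ} {Cl Cu V Vb : ℝ}
  (hT : 1 ≤ T) (hL : 1 ≤ L) (hLdn : 1 ≤ Ldn)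
  (hCl : 0 < Cl) (hCu : Cl < Cu) (hV : 0 < V)
  (hVVb : Vb + V ≤ Cu) (hVb1 : Cl < Vb) (hVb2 : Vb < Cl + V)

include hCl hCu hV hVVb hVb1 in
lemma inP_zero : inP T L Ldn Cl Cu V Vb (fun _ => 0) (fun _ => 0) := by
  refine ⟨fun _ _ _ => le_refl 0, fun _ _ _ => Or.inl rfl, ?_, ?_, ?_, ?_, ?_, ?_⟩ <;>
    intros <;> norm_num <;> linarith

include hCl hCu hV hVVb hVb1 in
lemma inP_ones (x : ℤ → ℝ)
    (hx1 : ∀ i : ℤ, 1 ≤ i → i ≤ T → Cl ≤ x i ∧ x i ≤ Cu)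
    (hx2 : ∀ i : ℤ, 2 ≤ i → i ≤ T → |x i - x (i - 1)| ≤ V) :
    inP T L Ldn Cl Cu V Vb x yOne := by
  refine ⟨fun i h1 h2 => le_trans hCl.le (hx1 i h1 h2).1,
    fun _ _ _ => Or.inr rfl, ?_, ?_, ?_, ?_, ?_, ?_⟩
  · intros; simp [yOne]
  · intros; simp [yOne]
  · intro i h1 h2; simpa [yOne] using (hx1 i h1 h2).1
  · intro i h1 h2; simpa [yOne] using (hx1 i h1 h2).2
  · intro i h1 h2
    have := abs_le.mp (hx2 i h1 h2)
    simp only [yOne]; linarith [this.2]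
  · intro i h1 h2
    have := abs_le.mp (hx2 i h1 h2)
    simp only [yOne]; linarith [this.1]

include hCl hCu hV hVVb hVb1 in
lemma inP_up (k : ℤ) (hk : 2 ≤ k) :
    inP T L Ldn Cl Cu V Vb (xUp Cu V Vb k) (yUp k) := by
  have hVb0 : 0 < Vb := lt_trans hCl hVb1
  have hCu0 : 0 < Cu := lt_trans hCl hCu
  refine ⟨?_, ?_, ?_, ?_, ?_, ?_, ?_, ?_⟩
  · intro i h1 h2
    simp only [xUp]
    split_ifs with h
    · have hc : (0:ℝ) ≤ ((i - k : ℤ) : ℝ) := by exact_mod_cast sub_nonneg.mpr h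
      have : 0 ≤ ((i - k : ℤ) : ℝ) * V := mul_nonneg hc hV.le
      exact le_min (by linarith) hCu0.le
    · exact le_refl 0
  · intro i _ _; simp only [yUp]; split_ifs <;> simp
  · intro a b h1 h2 h3 h4
    simp only [yUp]
    split_ifs with g1 g2 g3 <;> norm_num <;> omega
  · intro a b h1 h2 h3 h4
    simp only [yUp]
    split_ifs with g1 g2 g3 <;> norm_num <;> omega
  · intro i h1 h2
    simp only [xUp, yUp]
    split_ifs with h
    · have hc : (0:ℝ) ≤ ((i - k : ℤ) : ℝ) := by exact_mod_cast sub_nonneg.mpr h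
      have : 0 ≤ ((i - k : ℤ) : ℝ) * V := mul_nonneg hc hV.le
      rw [mul_one]
      exact le_min (by linarith) (by linarith)
    · simp
  · intro i h1 h2
    simp only [xUp, yUp]
    split_ifs with h
    · rw [mul_one]; exact min_le_right _ _
    · simp
  · intro i h1 h2
    by_cases g1 : k ≤ i - 1
    · have g2 : k ≤ i := by omega
      simp only [xUp, yUp, if_pos g1, if_pos g2]
      have hcast : ((i - k : ℤ) : ℝ) = ((i - 1 - k : ℤ) : ℝ) + 1 := by push_cast; ring
      rw [hcast]
      have hmin := min_add_sub (Vb + ((i - 1 - k : ℤ) : ℝ) * V) Cu V hV.le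
      have heq : Vb + (((i - 1 - k : ℤ) : ℝ) + 1) * V
          = (Vb + ((i - 1 - k : ℤ) : ℝ) * V) + V := by ring
      rw [heq]; linarith
    · by_cases g2 : k ≤ i
      · simp only [xUp, yUp, if_pos g2, if_neg g1]
        have hik : i = k := by omega
        have hz : ((i - k : ℤ) : ℝ) = 0 := by rw [hik]; norm_num
        rw [hz]
        have hm : min (Vb + 0 * V) Cu ≤ Vb := by
          rw [zero_mul, add_zero]; exact min_le_left _ _
        linarith
      · simp only [xUp, yUp, if_neg g1, if_neg g2]; norm_num; linarith
  · intro i h1 h2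
    by_cases g1 : k ≤ i - 1
    · have g2 : k ≤ i := by omega
      simp only [xUp, yUp, if_pos g1, if_pos g2]
      have hc0 : ((i - 1 - k : ℤ) : ℝ) ≤ ((i - k : ℤ) : ℝ) := by
        exact_mod_cast (by omega : (i - 1 - k : ℤ) ≤ i - k)
      have hc1 : ((i - 1 - k : ℤ) : ℝ) * V ≤ ((i - k : ℤ) : ℝ) * V := by nlinarith
      have hm : min (Vb + ((i - 1 - k : ℤ) : ℝ) * V) Cu
          ≤ min (Vb + ((i - k : ℤ) : ℝ) * V) Cu := min_le_min (by linarith) le_rfl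
      linarith
    · by_cases g2 : k ≤ i
      · simp only [xUp, yUp, if_pos g2, if_neg g1]
        have hik : i = k := by omega
        have hz : ((i - k : ℤ) : ℝ) = 0 := by rw [hik]; norm_num
        rw [hz]
        have hm : (0:ℝ) ≤ min (Vb + 0 * V) Cu := by
          rw [zero_mul, add_zero]; exact le_min hVb0.le hCu0.le
        linarith
      · simp only [xUp, yUp, if_neg g1, if_neg g2]; norm_num; linarith

include hCl hCu hV hVVb hVb1 in
lemma inP_dn (k : ℤ) (hk : 2 ≤ k) :
    inP T L Ldn Cl Cu V Vb (xDn Vb k) (yDn k) := by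
  have hVb0 : 0 < Vb := lt_trans hCl hVb1
  have hVbCu : Vb ≤ Cu := by linarith
  refine ⟨?_, ?_, ?_, ?_, ?_, ?_, ?_, ?_⟩
  · intro i _ _; simp only [xDn]; split_ifs <;> [exact hVb0.le; exact le_refl 0]
  · intro i _ _; simp only [yDn]; split_ifs <;> simp
  · intro a b h1 h2 h3 h4
    simp only [yDn]
    split_ifs with g1 g2 g3 <;> norm_num <;> omega
  · intro a b h1 h2 h3 h4
    simp only [yDn]
    split_ifs with g1 g2 g3 <;> norm_num <;> omega
  · intro i _ _; simp only [xDn, yDn]; split_ifs <;> norm_num; linarith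
  · intro i _ _; simp only [xDn, yDn]; split_ifs <;> norm_num; exact hVbCu
  · intro i h1 h2
    simp only [xDn, yDn]
    split_ifs with g1 g2 g3 <;> norm_num <;> first | linarith | omega
  · intro i h1 h2
    simp only [xDn, yDn]
    split_ifs with g1 g2 g3 <;> norm_num <;> first | linarith | omega

include hCl hCu hV hVVb hVb1 in
lemma inP_pert (e : ℝ) (he1 : 0 < e) (he2 : e ≤ V) (he3 : e ≤ Cu - Cl) (j : ℤ) :
    inP T L Ldn Cl Cu V Vb (xPert Cu e j) yOne := by
  apply inP_ones hCl hCu hV hVVb hVb1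
  · intro i _ _; simp only [xPert]; split_ifs <;> constructor <;> linarith
  · intro i _ _
    simp only [xPert]
    split_ifs <;> rw [abs_le] <;> constructor <;> linarith
end lems

lemma yUp_diff_zero {k a : ℤ} (h : k ≠ a) : yUp k a - yUp k (a - 1) = 0 := by
  simp only [yUp]; split_ifs <;> norm_num <;> omega

lemma yUp_diff_one (k : ℤ) : yUp k k - yUp k (k - 1) = 1 := by
  simp only [yUp]; rw [if_pos le_rfl, if_neg (by omega)]; norm_num

lemma yDn_diff_zero {k a : ℤ} (h : k ≠ a) : yDn k a - yDn k (a - 1) = 0 := by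
  simp only [yDn]; split_ifs <;> norm_num <;> omega

lemma yDn_diff_negone (k : ℤ) : yDn k k - yDn k (k - 1) = -1 := by
  simp only [yDn]; rw [if_neg (by omega), if_pos (by omega)]; norm_num

/-- index of the perturbed coordinate for the upper-range points -/
def jdx (t : ℤ) (n m : ℕ) : ℤ :=
  if ((m - n : ℕ) : ℤ) < t then ((m - n : ℕ) : ℤ) else ((m - n : ℕ) : ℤ) + 1

lemma jdx_spec (t : ℤ) (n m : ℕ) (h1 : n < m) (h2 : m < 2 * n) (ht : 1 ≤ t) :
    1 ≤ jdx t n m ∧ jdx t n m ≤ (n : ℤ) ∧ jdx t n m ≠ t := by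
  unfold jdx; split_ifs with h <;> refine ⟨by omega, by omega, by omega⟩

lemma jdx_inj (t : ℤ) (n : ℕ) {m1 m2 : ℕ} (h1 : n < m1) (h2 : n < m2) (hne : m1 ≠ m2) :
    jdx t n m1 ≠ jdx t n m2 := by
  unfold jdx; split_ifs <;> omega

/-- the family of `2 n` points -/
def pt (Cu V Vb e : ℝ) (t : ℤ) (S : Finset ℤ) (n m : ℕ) : (ℤ → ℝ) × (ℤ → ℝ) :=
  if m = 0 then (fun _ => 0, fun _ => 0)
  else if m < n then
    (if t < (m : ℤ) + 1 ∨ t - ((m : ℤ) + 1) ∈ S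
      then (xUp Cu V Vb ((m : ℤ) + 1), yUp ((m : ℤ) + 1))
      else (xDn Vb ((m : ℤ) + 1), yDn ((m : ℤ) + 1)))
  else if m = n then (fun _ => Cu, yOne)
  else (xPert Cu e (jdx t n m), yOne)

section ptlems
variable (Cu V Vb e : ℝ) (t : ℤ) (S : Finset ℤ) (n : ℕ)

lemma pt_zero : pt Cu V Vb e t S n 0 = (fun _ => 0, fun _ => 0) := by
  unfold pt; rw [if_pos rfl]

lemma pt_B {m : ℕ} (h1 : 0 < m) (h2 : m < n) :
    pt Cu V Vb e t S n m =
      if t < (m : ℤ) + 1 ∨ t - ((m : ℤ) + 1) ∈ S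
        then (xUp Cu V Vb ((m : ℤ) + 1), yUp ((m : ℤ) + 1))
        else (xDn Vb ((m : ℤ) + 1), yDn ((m : ℤ) + 1)) := by
  unfold pt; rw [if_neg (by omega), if_pos h2]

lemma pt_A0 (hn : 0 < n) : pt Cu V Vb e t S n n = (fun _ => Cu, yOne) := by
  unfold pt; rw [if_neg (by omega), if_neg (lt_irrefl n), if_pos rfl]

lemma pt_A {m : ℕ} (h : n < m) :
    pt Cu V Vb e t S n m = (xPert Cu e (jdx t n m), yOne) := by
  unfold pt; rw [if_neg (by omega), if_neg (by omega), if_neg (by omega)]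

lemma pt_snd_hi {m : ℕ} (h1 : 0 < n) (h : n ≤ m) : (pt Cu V Vb e t S n m).2 = yOne := by
  rcases eq_or_lt_of_le h with h' | h'
  · rw [← h', pt_A0 Cu V Vb e t S n h1]
  · rw [pt_A Cu V Vb e t S n h']

lemma pt_snd_diff_zero {m : ℕ} (a : ℤ) (h1 : 0 < n)
    (ha : ((m : ℤ) + 1 ≠ a) ∨ ¬(0 < m ∧ m < n)) :
    (pt Cu V Vb e t S n m).2 a - (pt Cu V Vb e t S n m).2 (a - 1) = 0 := by
  by_cases h0 : m = 0
  · subst h0; rw [pt_zero]; simp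
  by_cases hm : m < n
  · have hk : (m : ℤ) + 1 ≠ a := ha.resolve_right (not_not_intro ⟨by omega, hm⟩)
    rw [pt_B Cu V Vb e t S n (by omega) hm]
    split_ifs
    · exact yUp_diff_zero hk
    · exact yDn_diff_zero hk
  · rw [pt_snd_hi Cu V Vb e t S n h1 (by omega)]; simp [yOne]

lemma pt_snd_diff_pm {m : ℕ} (h1 : 0 < m) (h2 : m < n) :
    (pt Cu V Vb e t S n m).2 ((m : ℤ) + 1) - (pt Cu V Vb e t S n m).2 ((m : ℤ) + 1 - 1) = 1 ∨
    (pt Cu V Vb e t S n m).2 ((m : ℤ) + 1) - (pt Cu V Vb e t S n m).2 ((m : ℤ) + 1 - 1) = -1 := by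
  rw [pt_B Cu V Vb e t S n h1 h2]
  split_ifs
  · exact Or.inl (yUp_diff_one _)
  · exact Or.inr (yDn_diff_negone _)

end ptlems

theorem stmt_7 (T L Ldn : ℤ) (Cl Cu V Vb : ℝ)
    (hT : 1 ≤ T) (hL : 1 ≤ L) (hLdn : 1 ≤ Ldn)
    (hCl : 0 < Cl) (hCu : Cl < Cu) (hV : 0 < V)
    (hVVb : Vb + V ≤ Cu) (hVb1 : Cl < Vb) (hVb2 : Vb < Cl + V)
    (S : Finset ℤ)
    (hS : S ⊆ Finset.Icc 0 (min (min (L - 1) (T - 2)) ⌊(Cu - Vb) / V⌋))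
    (t : ℤ) (ht1 : 1 ≤ t) (ht2 : t ≤ T) (htS : ∀ s ∈ S, s + 2 ≤ t) :
    ∃ p : Fin (2 * T.toNat) → (ℤ → ℝ) × (ℤ → ℝ),
      (∀ i, inP T L Ldn Cl Cu V Vb (p i).1 (p i).2 ∧
        (p i).1 t = Cu * (p i).2 t -
          ∑ s ∈ S, (Cu - Vb - (s : ℝ) * V) * ((p i).2 (t - s) - (p i).2 (t - s - 1))) ∧
      AffineIndependent ℝ (fun i => embed T (p i)) := by
  classical
  set n : ℕ := T.toNat with hn
  have hn1 : 1 ≤ n := by omega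
  set ε : ℝ := min V (Cu - Cl) with hε
  have hε1 : 0 < ε := lt_min hV (by linarith)
  have hε2 : ε ≤ V := min_le_left _ _
  have hε3 : ε ≤ Cu - Cl := min_le_right _ _
  have hS0 : ∀ s ∈ S, 0 ≤ s ∧ s + 2 ≤ t ∧ (s : ℝ) * V ≤ Cu - Vb := by
    intro s hs
    have h := Finset.mem_Icc.mp (hS hs)
    refine ⟨h.1, htS s hs, ?_⟩
    have h2 : s ≤ ⌊(Cu - Vb) / V⌋ := le_trans h.2 (min_le_right _ _)
    have h3 : (s : ℝ) ≤ (Cu - Vb) / V := Int.le_floor.mp h2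
    calc (s : ℝ) * V ≤ ((Cu - Vb) / V) * V := by nlinarith
      _ = Cu - Vb := div_mul_cancel₀ _ (ne_of_gt hV)
  refine ⟨fun i => pt Cu V Vb ε t S n i.val, ?_, ?_⟩
  · intro i
    dsimp only
    rcases Nat.eq_zero_or_pos i.val with h0 | h0
    · rw [h0, pt_zero]
      refine ⟨inP_zero hCl hCu hV hVVb hVb1, ?_⟩
      dsimp only
      rw [Finset.sum_eq_zero (fun s _ => by ring)]
      ring
    · by_cases hm : i.val < n
      · rw [pt_B Cu V Vb ε t S n h0 hm]
        have hk2 : 2 ≤ (i.val : ℤ) + 1 := by omega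
        have hkT : (i.val : ℤ) + 1 ≤ T := by omega
        split_ifs with hcond
        · refine ⟨inP_up hCl hCu hV hVVb hVb1 _ hk2, ?_⟩
          dsimp only
          rcases hcond with hlt | hmem
          · have hx : xUp Cu V Vb ((i.val : ℤ) + 1) t = 0 := if_neg (by omega)
            have hy : yUp ((i.val : ℤ) + 1) t = 0 := if_neg (by omega)
            rw [hx, hy, Finset.sum_eq_zero, mul_zero, sub_zero]
            intro s hs
            rw [yUp_diff_zero (by have := (hS0 s hs).1; omega :
              (i.val : ℤ) + 1 ≠ t - s), mul_zero]
          · have hmem' := hS0 _ hmem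
            have hkt : (i.val : ℤ) + 1 ≤ t := by omega
            have hy : yUp ((i.val : ℤ) + 1) t = 1 := if_pos hkt
            have hcast : ((t - ((i.val : ℤ) + 1) : ℤ) : ℝ) * V ≤ Cu - Vb := hmem'.2.2
            have hx : xUp Cu V Vb ((i.val : ℤ) + 1) t
                = Vb + ((t - ((i.val : ℤ) + 1) : ℤ) : ℝ) * V := by
              simp only [xUp, if_pos hkt]
              exact min_eq_left (by linarith)
            have hsum : ∑ s ∈ S, (Cu - Vb - (s : ℝ) * V) *
                (yUp ((i.val : ℤ) + 1) (t - s) - yUp ((i.val : ℤ) + 1) (t - s - 1))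
                = Cu - Vb - ((t - ((i.val : ℤ) + 1) : ℤ) : ℝ) * V := by
              rw [Finset.sum_eq_single (t - ((i.val : ℤ) + 1))]
              · rw [show t - (t - ((i.val : ℤ) + 1)) = (i.val : ℤ) + 1 by ring,
                  yUp_diff_one, mul_one]
              · intro b _ hbne
                rw [yUp_diff_zero (by omega : (i.val : ℤ) + 1 ≠ t - b), mul_zero]
              · intro hc; exact absurd hmem hc
            rw [hx, hy, hsum]; ring
        · push_neg at hcond
          obtain ⟨hkt', hns⟩ := hcond
          refine ⟨inP_dn hCl hCu hV hVVb hVb1 _ hk2, ?_⟩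
          dsimp only
          have hy : yDn ((i.val : ℤ) + 1) t = 0 := if_neg (by omega)
          have hx : xDn Vb ((i.val : ℤ) + 1) t = 0 := if_neg (by omega)
          rw [hx, hy, Finset.sum_eq_zero, mul_zero, sub_zero]
          intro s hs
          have hne : (i.val : ℤ) + 1 ≠ t - s := by
            intro hc
            exact hns (by rw [show t - ((i.val : ℤ) + 1) = s by omega]; exact hs)
          rw [yDn_diff_zero hne, mul_zero]
      · by_cases hmn : i.val = n
        · rw [hmn, pt_A0 Cu V Vb ε t S n (by omega)]
          refine ⟨inP_ones hCl hCu hV hVVb hVb1 _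
            (fun _ _ _ => ⟨le_of_lt hCu, le_refl _⟩)
            (fun _ _ _ => by simpa using hV.le), ?_⟩
          dsimp only
          rw [Finset.sum_eq_zero (fun s _ => by simp [yOne])]
          simp [yOne]
        · have hgt : n < i.val := by omega
          rw [pt_A Cu V Vb ε t S n hgt]
          obtain ⟨hj1, hj2, hj3⟩ := jdx_spec t n i.val hgt i.isLt ht1
          refine ⟨inP_pert hCl hCu hV hVVb hVb1 ε hε1 hε2 hε3 _, ?_⟩
          dsimp only
          have hxt : xPert Cu ε (jdx t n i.val) t = Cu := if_neg (Ne.symm hj3)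
          rw [hxt, Finset.sum_eq_zero (fun s _ => by simp [yOne])]
          simp [yOne]
  · rw [affineIndependent_iff]
    intro sF w hw0 hws e hes
    set P : ℕ → (ℤ → ℝ) × (ℤ → ℝ) := fun m => pt Cu V Vb ε t S n m with hP
    set h : Fin (2 * n) → ℝ := fun i => if i ∈ sF then w i else 0 with hh
    have hsum : ∑ i : Fin (2 * n), h i • embed T (P i.val) = 0 := by
      have hterm : ∀ i : Fin (2 * n),
          h i • embed T (P i.val) = if i ∈ sF then w i • embed T (P i.val) else 0 := by
        intro i; simp only [hh]; split_ifs <;> simp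
      rw [Finset.sum_congr rfl (fun i _ => hterm i), Finset.sum_ite_mem,
        Finset.univ_inter]
      exact hws
    have hsum0 : ∑ i : Fin (2 * n), h i = 0 := by
      simp only [hh]
      rw [Finset.sum_ite_mem, Finset.univ_inter]; exact hw0
    have Hsnd : ∀ j' : Fin n,
        ∑ i : Fin (2 * n), h i * (P i.val).2 (((j' : ℕ) : ℤ) + 1) = 0 := by
      intro j'
      have h2 := congrArg (fun q => q.2 j') hsum
      simpa [embed, Prod.snd_sum, Finset.sum_apply, Prod.smul_snd, smul_eq_mul] using h2
    have Hfst : ∀ j' : Fin n,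
        ∑ i : Fin (2 * n), h i * (P i.val).1 (((j' : ℕ) : ℤ) + 1) = 0 := by
      intro j'
      have h2 := congrArg (fun q => q.1 j') hsum
      simpa [embed, Prod.fst_sum, Finset.sum_apply, Prod.smul_fst, smul_eq_mul] using h2
    have E2 : ∀ j : ℤ, 1 ≤ j → j ≤ T →
        ∑ i : Fin (2 * n), h i * (P i.val).2 j = 0 := by
      intro j hj1 hj2
      have hlt : (j - 1).toNat < n := by omega
      have := Hsnd ⟨(j - 1).toNat, hlt⟩
      rwa [show ((((⟨(j - 1).toNat, hlt⟩ : Fin n) : ℕ)) : ℤ) + 1 = j by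
        simp only [Fin.val_mk]; omega] at this
    have E1 : ∀ j : ℤ, 1 ≤ j → j ≤ T →
        ∑ i : Fin (2 * n), h i * (P i.val).1 j = 0 := by
      intro j hj1 hj2
      have hlt : (j - 1).toNat < n := by omega
      have := Hfst ⟨(j - 1).toNat, hlt⟩
      rwa [show ((((⟨(j - 1).toNat, hlt⟩ : Fin n) : ℕ)) : ℤ) + 1 = j by
        simp only [Fin.val_mk]; omega] at this
    have hB : ∀ i : Fin (2 * n), 0 < i.val → i.val < n → h i = 0 := by
      intro i h1 h2
      have e1 := E2 ((i.val : ℤ) + 1) (by omega) (by omega)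
      have e2 := E2 ((i.val : ℤ) + 1 - 1) (by omega) (by omega)
      have e3 : ∑ b : Fin (2 * n),
          h b * ((P b.val).2 ((i.val : ℤ) + 1) - (P b.val).2 ((i.val : ℤ) + 1 - 1)) = 0 := by
        simp only [mul_sub, Finset.sum_sub_distrib, e1, e2, sub_zero]
      rw [Finset.sum_eq_single i] at e3
      · rcases pt_snd_diff_pm Cu V Vb ε t S n h1 h2 with hd | hd <;>
          rw [hP] at e3 <;> rw [hd] at e3 <;> linarith
      · intro b _ hbne
        have hz : (P b.val).2 ((i.val : ℤ) + 1) - (P b.val).2 ((i.val : ℤ) + 1 - 1) = 0 := by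
          apply pt_snd_diff_zero Cu V Vb ε t S n _ (by omega)
          by_cases hb : 0 < b.val ∧ b.val < n
          · exact Or.inl (by
              have : b.val ≠ i.val := fun hc => hbne (Fin.ext hc)
              omega)
          · exact Or.inr hb
        rw [hz, mul_zero]
      · intro hni; exact absurd (Finset.mem_univ i) hni
    have hH : ∑ b : Fin (2 * n), (if n ≤ b.val then h b else 0) = 0 := by
      have e1 := E2 1 le_rfl (by omega)
      have hterm : ∀ b : Fin (2 * n),
          h b * (P b.val).2 1 = (if n ≤ b.val then h b else 0) := by
        intro b
        rcases Nat.eq_zero_or_pos b.val with hb | hb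
        · simp only [hb, hP, pt_zero]
          rw [if_neg (by omega)]; simp
        · by_cases hbn : b.val < n
          · rw [hB b hb hbn, zero_mul, if_neg (by omega)]
          · rw [show (P b.val).2 = yOne from pt_snd_hi Cu V Vb ε t S n (by omega) (by omega),
              if_pos (by omega)]
            simp [yOne]
      calc ∑ b : Fin (2 * n), (if n ≤ b.val then h b else 0)
          = ∑ b : Fin (2 * n), h b * (P b.val).2 1 :=
            Finset.sum_congr rfl (fun b _ => (hterm b).symm)
        _ = 0 := e1
    have hA : ∀ i : Fin (2 * n), n < i.val → h i = 0 := by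
      intro i hi
      obtain ⟨hj1, hj2, hj3⟩ := jdx_spec t n i.val hi i.isLt ht1
      have e1 := E1 (jdx t n i.val) hj1 (by omega)
      have key : ∀ b : Fin (2 * n), h b * (P b.val).1 (jdx t n i.val)
          = (if n ≤ b.val then h b * Cu else 0) - (if b = i then ε * h b else 0) := by
        intro b
        rcases Nat.eq_zero_or_pos b.val with hb | hb
        · have hbne : b ≠ i := fun hc => by rw [hc] at hb; omega
          simp only [hb, hP, pt_zero]
          rw [if_neg (by omega), if_neg hbne]; simp
        · by_cases hbn : b.val < n
          · have hbne : b ≠ i := fun hc => by rw [hc] at hbn; omega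
            rw [hB b hb hbn, zero_mul, if_neg (by omega), if_neg hbne, sub_zero]
          · by_cases hbeq : b.val = n
            · have hbne : b ≠ i := fun hc => by rw [hc] at hbeq; omega
              simp only [hP, hbeq, pt_A0 Cu V Vb ε t S n (by omega)]
              rw [if_pos (by omega), if_neg hbne, sub_zero]
            · have hbgt : n < b.val := by omega
              simp only [hP, pt_A Cu V Vb ε t S n hbgt]
              by_cases hbi : b = i
              · subst hbi
                simp only [xPert]
                simp only [if_true]
                rw [if_pos (show n ≤ b.val from by omega)]
                ring
              · have hne : jdx t n i.val ≠ jdx t n b.val :=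
                  jdx_inj t n hi hbgt (fun hc => hbi (Fin.ext hc.symm))
                simp only [xPert, if_neg hne]
                rw [if_pos (by omega), if_neg hbi, sub_zero]
      have e2 : (∑ b : Fin (2 * n), (if n ≤ b.val then h b * Cu else 0))
          - (∑ b : Fin (2 * n), (if b = i then ε * h b else 0)) = 0 := by
        rw [← Finset.sum_sub_distrib]
        rw [← Finset.sum_congr rfl (fun b _ => key b)]
        exact e1
      have e3 : ∑ b : Fin (2 * n), (if n ≤ b.val then h b * Cu else 0) = 0 := by
        have hterm : ∀ b : Fin (2 * n), (if n ≤ b.val then h b * Cu else 0)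
            = (if n ≤ b.val then h b else 0) * Cu := by
          intro b; split_ifs <;> simp
        rw [Finset.sum_congr rfl (fun b _ => hterm b), ← Finset.sum_mul, hH, zero_mul]
      have e4 : ∑ b : Fin (2 * n), (if b = i then ε * h b else 0) = ε * h i := by
        rw [Finset.sum_ite_eq' Finset.univ i (fun b => ε * h b)]
        exact if_pos (Finset.mem_univ i)
      rw [e3, e4] at e2
      have : ε * h i = 0 := by linarith
      exact (mul_eq_zero.mp this).resolve_left (ne_of_gt hε1)
    have hAn : ∀ i : Fin (2 * n), i.val = n → h i = 0 := by
      intro i hieq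
      have hterm : ∀ b : Fin (2 * n),
          (if n ≤ b.val then h b else 0) = (if b = i then h b else 0) := by
        intro b
        by_cases hbn : n ≤ b.val
        · rcases eq_or_lt_of_le hbn with h' | h'
          · have : b = i := Fin.ext (by omega)
            rw [if_pos hbn, if_pos this]
          · rw [if_pos hbn, hA b h', if_neg (fun hc => by rw [hc] at h'; omega)]
        · rw [if_neg hbn, if_neg (fun hc => by rw [hc] at hbn; omega)]
      rw [Finset.sum_congr rfl (fun b _ => hterm b),
        Finset.sum_ite_eq' Finset.univ i (fun b => h b), if_pos (Finset.mem_univ i)] at hH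
      exact hH
    have hpos : ∀ i : Fin (2 * n), 0 < i.val → h i = 0 := by
      intro i h1
      rcases lt_trichotomy i.val n with hlt | heq | hgt
      · exact hB i h1 hlt
      · exact hAn i heq
      · exact hA i hgt
    have hall : ∀ i : Fin (2 * n), h i = 0 := by
      intro i
      rcases Nat.eq_zero_or_pos i.val with h1 | h1
      · have : ∑ b : Fin (2 * n), h b = h i := by
          apply Finset.sum_eq_single i
          · intro b _ hbne
            exact hpos b (by
              have : b.val ≠ i.val := fun hc => hbne (Fin.ext hc)
              omega)
          · intro hni; exact absurd (Finset.mem_univ i) hni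
        rw [hsum0] at this; exact this.symm
      · exact hpos i h1
    have := hall e
    simp only [hh] at this
    rwa [if_pos hes] at this
end

section
/- Let α, β, s_max be integers such that (a) L ≤ s_max ≤ min{T−2, ⌊(C̄−V̄)/V⌋}, (b) 0 ≤ α < β ≤ s_max, and (c) β = α+1 or s_max ≤ L+α, and let S = [0,α] ∪ [β, s_max] (an interval union of integers). Then for any integer t with s_max+2 ≤ t ≤ T, every (x, y) ∈ P satisfies x_t ≤ C̄·y_t − Σ_{s∈S} (C̄ − V̄ − s·V)·(y_{t−s} − y_{t−s−1}). -/
/-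
Write `w s = y (t - s)` for the on/off history seen from `t` and `c s = C̄ - V̄ - s V`, which is
nonnegative on `[0, s_max]` and decreasing. If the unit was started up at `t - r` and has been
on since, ramping gives `x t ≤ V̄ + r V = C̄ - c r`, and the terms of the sum with `s < r`
vanish; so it suffices that every tail `∑_{s ∈ S, s ≥ r} c s (w s - w (s + 1))` is at most
`c r w r`. This follows by backward induction on `r`, the monotonicity of `c` absorbing each new
term. The only obstruction is a shut-down inside the gap `(α, β)` of `S`, and condition (c)
together with the minimum up time keeps the unit on from then back to `t - s_max - 1`, so that
all later terms vanish.
-/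

open Finset

theorem sum_filter_sub_one_le_eq (f : ℤ → ℝ) (S : Finset ℤ) (r : ℤ) :
    ∑ s ∈ S with r - 1 ≤ s, f s =
      (if r - 1 ∈ S then f (r - 1) else 0) + ∑ s ∈ S with r ≤ s, f s := by
  rw [sum_filter, sum_filter, ← sum_ite_eq' S (r - 1) f, ← sum_add_distrib]
  refine sum_congr rfl fun s _ => ?_
  by_cases hs : s = r - 1
  · simp [hs]
  · rw [if_neg hs, zero_add]
    exact if_congr (by omega) rfl rfl

theorem sum_filter_le_mul_sub_succ_le (c w : ℤ → ℝ) (S : Finset ℤ) {a m : ℤ}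
    (hmS : m ∈ S) (hSm : ∀ s ∈ S, s ≤ m)
    (hanti : ∀ s, a ≤ s → s < m → c (s + 1) ≤ c s)
    (hnonneg : ∀ s, a ≤ s → s ≤ m → 0 ≤ c s)
    (hw : ∀ s, a ≤ s → s ≤ m + 1 → 0 ≤ w s)
    (hgap : ∀ r, a ≤ r → r < m → r ∉ S → w r < w (r + 1) →
      ∀ s, r < s → s ≤ m → w (s + 1) = w s) :
    ∀ r, a ≤ r → r ≤ m → ∑ s ∈ S with r ≤ s, c s * (w s - w (s + 1)) ≤ c r * w r := by
  intro r har hrm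
  induction r, hrm using Int.leInductionDown with
  | base =>
    have hS : {s ∈ S | m ≤ s} = {m} := by
      ext s; simp only [mem_filter, mem_singleton]
      exact ⟨fun h => le_antisymm (hSm s h.1) h.2, by rintro rfl; exact ⟨hmS, le_rfl⟩⟩
    rw [hS, sum_singleton]
    nlinarith [hnonneg m har le_rfl, hw (m + 1) (by omega) le_rfl]
  | pred r hrm ih =>
    have ih := ih (by omega)
    have hanti_r := hanti (r - 1) har (by omega)
    have hnonnegr := hnonneg (r - 1) har (by omega)
    rw [sub_add_cancel] at hanti_r
    rw [sum_filter_sub_one_le_eq, sub_add_cancel]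
    split_ifs with hS
    · nlinarith [hw r (by omega) (by omega)]
    · rcases le_or_gt (w r) (w (r - 1)) with hdec | hinc
      · nlinarith [hw r (by omega) (by omega)]
      · have hflat := hgap (r - 1) har (by omega) hS (by rwa [sub_add_cancel])
        have hzero : ∑ s ∈ S with r ≤ s, c s * (w s - w (s + 1)) = 0 := by
          refine sum_eq_zero fun s hs => ?_
          rw [mem_filter] at hs
          rw [hflat s (by omega) (hSm s hs.1), sub_self, mul_zero]
        rw [hzero, zero_add]
        exact mul_nonneg hnonnegr (hw (r - 1) har (by omega))

theorem forall_eq_one_or_exists_first_zero (w : ℤ → ℝ) {a b : ℤ} (hab : a ≤ b) (ha : w a = 1)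
    (hw : ∀ s, a ≤ s → s ≤ b → w s = 0 ∨ w s = 1) :
    (∀ s, a ≤ s → s ≤ b → w s = 1) ∨
      ∃ r, a ≤ r ∧ r < b ∧ (∀ s, a ≤ s → s ≤ r → w s = 1) ∧ w (r + 1) = 0 := by
  induction b, hab using Int.leInduction with
  | base => exact .inl fun s h1 h2 => by rwa [le_antisymm h2 h1]
  | succ b hab ih =>
    rcases ih fun s h1 h2 => hw s h1 (by omega) with hall | ⟨r, har, hrb, hon, hoff⟩
    · rcases hw (b + 1) (by omega) le_rfl with hoff | hon
      · exact .inr ⟨b, hab, by omega, hall, hoff⟩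
      · refine .inl fun s h1 h2 => ?_
        rcases eq_or_lt_of_le h2 with rfl | h2
        · exact hon
        · exact hall s h1 (by omega)
    · exact .inr ⟨r, har, by omega, hon, hoff⟩

namespace inP

variable {T L Ldn : ℤ} {Cl Cu V Vb : ℝ} {x y : ℤ → ℝ}

theorem x_le_of_on_since (h : inP T L Ldn Cl Cu V Vb x y) {r : ℤ} (hr : 0 ≤ r) :
    ∀ t, r + 2 ≤ t → t ≤ T → y (t - (r + 1)) = 0 → (∀ s, 0 ≤ s → s ≤ r → y (t - s) = 1) →
      x t ≤ Vb + r * V := by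
  obtain ⟨-, -, -, -, -, hcap, hramp, -⟩ := h
  induction r, hr using Int.leInduction with
  | base =>
    intro t ht2 htT hoff _
    have h1 := hramp t (by omega) htT
    have h2 := hcap (t - 1) (by omega) (by omega)
    rw [zero_add] at hoff
    rw [hoff] at h1 h2
    push_cast
    linarith
  | succ r hr ih =>
    intro t ht2 htT hoff hon
    have h1 := hramp t (by omega) htT
    have hon1 : y (t - 1) = 1 := hon 1 zero_le_one (by omega)
    rw [hon1] at h1
    have h2 := ih (t - 1) (by omega) (by omega) (by rwa [sub_sub, add_comm 1])
      fun s h1 h2 => by rw [sub_sub, add_comm]; exact hon (s + 1) (by omega) (by omega)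
    push_cast
    linarith

theorem eq_one_before_shutdown (h : inP T L Ldn Cl Cu V Vb x y) {τ : ℤ} (hτT : τ ≤ T)
    (hoff : y τ = 0) (hon : y (τ - 1) = 1) :
    ∀ k, 1 ≤ k → τ - L ≤ k → k ≤ τ - 1 → y k = 1 := by
  obtain ⟨-, hbin, hup, -⟩ := h
  intro k hk1 hkL hkτ
  induction k, hkτ using Int.leInductionDown with
  | base => exact hon
  | pred k hkτ ih =>
    have hk := ih (by omega) (by omega)
    refine (hbin (k - 1) hk1 (by omega)).resolve_left fun hk0 => ?_
    have := hup k τ (by omega) (by omega) (by omega) (le_min hτT (by omega))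
    rw [hk0, hk, hoff] at this
    norm_num at this

theorem eq_of_shutdown (h : inP T L Ldn Cl Cu V Vb x y) {t r : ℤ} (htT : t ≤ T) (hr : 0 ≤ r)
    (hrt : r + 2 ≤ t) (hdown : y (t - r) < y (t - (r + 1))) :
    ∀ s, r < s → s < r + L → s + 2 ≤ t → y (t - (s + 1)) = y (t - s) := by
  obtain ⟨-, hbin, -⟩ := id h
  have hstep : y (t - r) = 0 ∧ y (t - (r + 1)) = 1 := by
    rcases hbin (t - r) (by omega) (by omega) with h0 | h0 <;>
      rcases hbin (t - (r + 1)) (by omega) (by omega) with h1 | h1 <;>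
      constructor <;> linarith
  have hon := h.eq_one_before_shutdown (by omega) hstep.1 (by rw [sub_sub]; exact hstep.2)
  intro s hrs hsL hst
  rw [hon (t - s) (by omega) (by omega) (by omega),
    hon (t - (s + 1)) (by omega) (by omega) (by omega)]

theorem sum_le_of_constant_before (h : inP T L Ldn Cl Cu V Vb x y) (hV : 0 ≤ V)
    {α β smax t : ℤ} (hsmax : (smax : ℝ) * V ≤ Cu - Vb)
    (hα : 0 ≤ α) (hαβ : α < β) (hβ : β ≤ smax)
    (hc : β = α + 1 ∨ smax ≤ L + α) (ht1 : smax + 2 ≤ t) (ht2 : t ≤ T)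
    (r : ℤ) (hr0 : 0 ≤ r) (hrm : r ≤ smax)
    (hflat : ∀ s, 0 ≤ s → s < r → y (t - s) = y (t - s - 1)) :
    ∑ s ∈ Icc 0 α ∪ Icc β smax, (Cu - Vb - (s : ℝ) * V) * (y (t - s) - y (t - s - 1)) ≤
      (Cu - Vb - (r : ℝ) * V) * y (t - r) := by
  obtain ⟨-, hbin, -⟩ := id h
  set S := Icc 0 α ∪ Icc β smax
  set c : ℤ → ℝ := fun s => Cu - Vb - s * V
  set w : ℤ → ℝ := fun s => y (t - s)
  have hS : ∀ s ∈ S, 0 ≤ s ∧ s ≤ smax := by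
    intro s hs; simp only [S, mem_union, mem_Icc] at hs; omega
  have hw : ∀ s, 0 ≤ s → s ≤ smax + 1 → 0 ≤ w s := fun s _ _ => by
    rcases hbin (t - s) (by omega) (by omega) with h | h <;> norm_num [w, h]
  have hgap : ∀ r, 0 ≤ r → r < smax → r ∉ S → w r < w (r + 1) →
      ∀ s, r < s → s ≤ smax → w (s + 1) = w s := by
    intro r hr0 hrm hrS hinc s hrs hsm
    have hr_gap : α < r ∧ r < β := by simp only [S, mem_union, mem_Icc] at hrS; omega
    have hsL : smax ≤ L + α := hc.resolve_left (by omega)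
    exact h.eq_of_shutdown ht2 hr0 (by omega) hinc s hrs (by omega) (by omega)
  have hF := sum_filter_le_mul_sub_succ_le c w S (a := 0) (m := smax)
    (by simp only [S, mem_union, mem_Icc]; omega) (fun s hs => (hS s hs).2)
    (fun s _ _ => by simp only [c]; push_cast; linarith)
    (fun s _ hs => by
      have : (s : ℝ) * V ≤ smax * V := by gcongr
      simp only [c]; linarith)
    hw hgap r hr0 hrm
  calc ∑ s ∈ S, (Cu - Vb - (s : ℝ) * V) * (y (t - s) - y (t - s - 1))
      = ∑ s ∈ S with r ≤ s, c s * (w s - w (s + 1)) := by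
        refine (sum_filter_of_ne fun s hs hne => ?_).symm.trans
          (sum_congr rfl fun s _ => by simp only [c, w, sub_sub])
        by_contra! hsr
        rw [hflat s (hS s hs).1 hsr, sub_self, mul_zero] at hne
        exact hne rfl
    _ ≤ c r * w r := hF

end inP

theorem stmt_8_general (T L Ldn : ℤ) (Cl Cu V Vb : ℝ)
    (hV : 0 < V)
    (α β smax : ℤ) (hs2 : smax ≤ min (T - 2) ⌊(Cu - Vb) / V⌋)
    (hα : 0 ≤ α) (hαβ : α < β) (hβ : β ≤ smax)
    (hc : β = α + 1 ∨ smax ≤ L + α)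
    (t : ℤ) (ht1 : smax + 2 ≤ t) (ht2 : t ≤ T)
    (x y : ℤ → ℝ) (hxy : inP T L Ldn Cl Cu V Vb x y) :
    x t ≤ Cu * y t - ∑ s ∈ Finset.Icc 0 α ∪ Finset.Icc β smax,
      (Cu - Vb - (s : ℝ) * V) * (y (t - s) - y (t - s - 1)) := by
  have hsmax : (smax : ℝ) * V ≤ Cu - Vb :=
    (le_div_iff₀ hV).mp (Int.le_floor.mp (hs2.trans (min_le_right _ _)))
  have hsT : smax ≤ T - 2 := hs2.trans (min_le_left _ _)
  have hbound := hxy.sum_le_of_constant_before hV.le hsmax hα hαβ hβ hc ht1 ht2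
  obtain ⟨-, hbin, -, -, -, hcap, -, -⟩ := id hxy
  have hcap := hcap t (by omega) ht2
  rcases hbin t (by omega) ht2 with hyt | hyt
  · have := hbound 0 le_rfl (by omega) fun s h1 h2 => by omega
    rw [sub_zero, hyt, mul_zero] at this
    rw [hyt] at hcap ⊢
    linarith
  · rw [hyt] at hcap ⊢
    rcases forall_eq_one_or_exists_first_zero (fun s => y (t - s)) (by omega : (0 : ℤ) ≤ smax + 1)
      (by rwa [sub_zero]) (fun s h1 h2 => hbin _ (by omega) (by omega))
      with hall | ⟨r, hr0, hrm, hon, hoff⟩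
    · have hzero : ∑ s ∈ Icc 0 α ∪ Icc β smax,
          (Cu - Vb - (s : ℝ) * V) * (y (t - s) - y (t - s - 1)) = 0 :=
        sum_eq_zero fun s hs => by
          have hs' : 0 ≤ s ∧ s ≤ smax := by simp only [mem_union, mem_Icc] at hs; omega
          rw [hall s hs'.1 (by omega), show t - s - 1 = t - (s + 1) by ring,
            hall (s + 1) (by omega) (by omega), sub_self, mul_zero]
      linarith
    · have := hbound r hr0 (by omega) fun s h1 h2 => by
        rw [hon s h1 h2.le, sub_sub, hon (s + 1) (by omega) (by omega)]
      rw [hon r hr0 le_rfl, mul_one] at this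
      have hramp := hxy.x_le_of_on_since hr0 t (by omega) ht2 hoff hon
      linarith

theorem stmt_8 (T L Ldn : ℤ) (Cl Cu V Vb : ℝ)
    (hT : 1 ≤ T) (hL : 1 ≤ L) (hLdn : 1 ≤ Ldn)
    (hCl : 0 < Cl) (hCu : Cl < Cu) (hV : 0 < V)
    (hVVb : Vb + V ≤ Cu) (hVb1 : Cl < Vb) (hVb2 : Vb < Cl + V)
    (α β smax : ℤ) (hs1 : L ≤ smax) (hs2 : smax ≤ min (T - 2) ⌊(Cu - Vb) / V⌋)
    (hα : 0 ≤ α) (hαβ : α < β) (hβ : β ≤ smax)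
    (hc : β = α + 1 ∨ smax ≤ L + α)
    (t : ℤ) (ht1 : smax + 2 ≤ t) (ht2 : t ≤ T)
    (x y : ℤ → ℝ) (hxy : inP T L Ldn Cl Cu V Vb x y) :
    x t ≤ Cu * y t - ∑ s ∈ Finset.Icc 0 α ∪ Finset.Icc β smax,
      (Cu - Vb - (s : ℝ) * V) * (y (t - s) - y (t - s - 1)) :=
  stmt_8_general T L Ldn Cl Cu V Vb hV α β smax hs2 hα hαβ hβ hc t ht1 ht2 x y hxy
end

section
/- Let S be a finite set of integers with S ⊆ [0, min{L−1, T−3, ⌊(C̄−V̄)/V⌋}], let η be a real number with 0 ≤ η ≤ min{L−1, (C̄−V̄)/V}, and let t be an integer with 1 ≤ t ≤ T−1 such that t ≥ s+2 for all s ∈ S. Then every (x, y) ∈ P satisfies x_t ≤ (C̄ − η·V)·y_t + η·V·y_{t+1} − Σ_{s∈S} (C̄ − V̄ − s·V)·(y_{t−s} − y_{t−s−1}). -/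
theorem stmt_9 (T L Ldn : ℤ) (Cl Cu V Vb : ℝ)
    (hT : 1 ≤ T) (hL : 1 ≤ L) (hLdn : 1 ≤ Ldn)
    (hCl : 0 < Cl) (hCu : Cl < Cu) (hV : 0 < V)
    (hVVb : Vb + V ≤ Cu) (hVb1 : Cl < Vb) (hVb2 : Vb < Cl + V)
    (S : Finset ℤ)
    (hS : S ⊆ Finset.Icc 0 (min (min (L - 1) (T - 3)) ⌊(Cu - Vb) / V⌋))
    (η : ℝ) (hη0 : 0 ≤ η) (hη1 : η ≤ min ((L : ℝ) - 1) ((Cu - Vb) / V))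
    (t : ℤ) (ht1 : 1 ≤ t) (ht2 : t ≤ T - 1) (htS : ∀ s ∈ S, s + 2 ≤ t)
    (x y : ℤ → ℝ) (hxy : inP T L Ldn Cl Cu V Vb x y) :
    x t ≤ (Cu - η * V) * y t + η * V * y (t + 1) -
      ∑ s ∈ S, (Cu - Vb - (s : ℝ) * V) * (y (t - s) - y (t - s - 1)) := by
  obtain ⟨hx0, hyb, hup, hdn, hClx, hxCu, hru, hrd⟩ := hxy
  set Z := ∑ s ∈ S, (Cu - Vb - (s : ℝ) * V) * (y (t - s) - y (t - s - 1)) with hZ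
  have hηL : η ≤ (L : ℝ) - 1 := (le_min_iff.mp hη1).1
  have hηV : η * V ≤ Cu - Vb := (le_div_iff₀ hV).mp (le_min_iff.mp hη1).2
  -- nonnegativity of coefficients
  have hcnn : ∀ s ∈ S, 0 ≤ Cu - Vb - (s : ℝ) * V := by
    intro s hs
    obtain ⟨hs0, hsm⟩ := Finset.mem_Icc.mp (hS hs)
    have hfl : s ≤ ⌊(Cu - Vb) / V⌋ := by omega
    have h1 : (s : ℝ) ≤ (Cu - Vb) / V := Int.le_floor.mp hfl
    have h2 : (s : ℝ) * V ≤ Cu - Vb := (le_div_iff₀ hV).mp h1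
    linarith
  -- stay-on lemma
  have hstay : ∀ s ∈ S, y (t - s) = 1 → y (t - s - 1) = 0 →
      ∀ k, t - s ≤ k → k ≤ T → k ≤ t - s + L - 1 → y k = 1 := by
    intro s hsS h1 h0 k hk1 hk2 hk3
    have hs2 := htS s hsS
    obtain ⟨hs0, hsm⟩ := Finset.mem_Icc.mp (hS hsS)
    have hcon := hup (t - s) k (by omega) (by omega) hk1 (le_min hk2 (by omega))
    rcases hyb k (by omega) hk2 with h | h
    · rw [h0, h1, h] at hcon; norm_num at hcon
    · exact h
  by_cases hex : ∃ s ∈ S, y (t - s) = 1 ∧ y (t - s - 1) = 0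
  · -- startup case
    obtain ⟨s₀, hsS, h1, h0⟩ := hex
    obtain ⟨hs0, hsm⟩ := Finset.mem_Icc.mp (hS hsS)
    have hs2 := htS s₀ hsS
    have hyt : y t = 1 := hstay s₀ hsS h1 h0 t (by omega) (by omega) (by omega)
    -- ramp chain
    have chain : ∀ n : ℕ, (n : ℤ) ≤ s₀ → x (t - s₀ + n) ≤ Vb + (n : ℝ) * V := by
      intro n
      induction n with
      | zero =>
        intro _
        have hr := hru (t - s₀) (by omega) (by omega)
        rw [h0] at hr
        have hx1 := hxCu (t - s₀ - 1) (by omega) (by omega)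
        have hx2 := hx0 (t - s₀ - 1) (by omega) (by omega)
        rw [h0] at hx1
        push_cast
        simp only [add_zero]
        linarith
      | succ n ih =>
        intro hn
        have hn' : (n : ℤ) ≤ s₀ := by push_cast at hn; omega
        have hih := ih hn'
        have hy : y (t - s₀ + n) = 1 :=
          hstay s₀ hsS h1 h0 (t - s₀ + n) (by omega) (by push_cast at hn; omega)
            (by push_cast at hn; omega)
        have hr := hru (t - s₀ + n + 1) (by omega) (by push_cast at hn; omega)
        rw [show t - s₀ + (n : ℤ) + 1 - 1 = t - s₀ + n from by ring, hy] at hr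
        push_cast
        rw [show t - s₀ + ((n : ℤ) + 1) = t - s₀ + n + 1 from by ring]
        linarith
    have hxt : x t ≤ Vb + (s₀ : ℝ) * V := by
      have hc := chain s₀.toNat (by omega)
      rw [show t - s₀ + (s₀.toNat : ℤ) = t from by omega] at hc
      have hcast : ((s₀.toNat : ℕ) : ℝ) = (s₀ : ℝ) := by
        rw [← Int.cast_natCast, Int.toNat_of_nonneg hs0]
      rw [hcast] at hc
      exact hc
    -- sum bound
    have hSum : Z ≤ Cu - Vb - (s₀ : ℝ) * V := by
      rw [hZ, ← Finset.add_sum_erase S _ hsS]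
      have h2 : ∑ s ∈ S.erase s₀, (Cu - Vb - (s : ℝ) * V) * (y (t - s) - y (t - s - 1)) ≤ 0 := by
        apply Finset.sum_nonpos
        intro s hs
        have hsS' := Finset.mem_of_mem_erase hs
        have hne : s ≠ s₀ := Finset.ne_of_mem_erase hs
        apply mul_nonpos_of_nonneg_of_nonpos (hcnn s hsS')
        have h2s := htS s hsS'
        obtain ⟨hs0', hsm'⟩ := Finset.mem_Icc.mp (hS hsS')
        rcases hyb (t - s) (by omega) (by omega) with ha | ha
        · have hb : 0 ≤ y (t - s - 1) := by
            rcases hyb (t - s - 1) (by omega) (by omega) with hb | hb <;> rw [hb] <;> norm_num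
          rw [ha]; linarith
        · rcases lt_or_gt_of_ne hne with hlt | hgt
          · have hb : y (t - s - 1) = 1 :=
              hstay s₀ hsS h1 h0 (t - s - 1) (by omega) (by omega) (by omega)
            rw [ha, hb]; norm_num
          · rcases hyb (t - s - 1) (by omega) (by omega) with hb | hb
            · exfalso
              have hcon := hstay s hsS' ha hb (t - s₀ - 1) (by omega) (by omega) (by omega)
              rw [h0] at hcon; norm_num at hcon
            · rw [ha, hb]; norm_num
      rw [h1, h0]
      linarith
    rcases hyb (t + 1) (by omega) (by omega) with h' | h'
    · -- y (t+1) = 0, so s₀ = L - 1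
      have hsL : s₀ = L - 1 := by
        by_contra hc
        have hcon := hstay s₀ hsS h1 h0 (t + 1) (by omega) (by omega) (by omega)
        rw [h'] at hcon; norm_num at hcon
      have hr := hrd (t + 1) (by omega) (by omega)
      rw [show t + 1 - 1 = t from by ring, h'] at hr
      have hx1 := hxCu (t + 1) (by omega) (by omega)
      rw [h'] at hx1
      rw [hyt, h']
      have hcast : ((s₀ : ℤ) : ℝ) = (L : ℝ) - 1 := by rw [hsL]; push_cast; ring
      rw [hcast] at hSum
      have hnn : (0 : ℝ) ≤ ((L : ℝ) - 1 - η) * V :=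
        mul_nonneg (by linarith) hV.le
      nlinarith
    · rw [hyt, h']
      linarith
  · -- no startup
    push_neg at hex
    have hSum : Z ≤ 0 := by
      rw [hZ]
      apply Finset.sum_nonpos
      intro s hs
      apply mul_nonpos_of_nonneg_of_nonpos (hcnn s hs)
      have h2s := htS s hs
      obtain ⟨hs0', hsm'⟩ := Finset.mem_Icc.mp (hS hs)
      rcases hyb (t - s) (by omega) (by omega) with ha | ha
      · have hb : 0 ≤ y (t - s - 1) := by
          rcases hyb (t - s - 1) (by omega) (by omega) with hb | hb <;> rw [hb] <;> norm_num
        rw [ha]; linarith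
      · rcases hyb (t - s - 1) (by omega) (by omega) with hb | hb
        · exact absurd hb (hex s hs ha)
        · rw [ha, hb]; norm_num
    have hy1nn : 0 ≤ y (t + 1) := by
      rcases hyb (t + 1) (by omega) (by omega) with h' | h' <;> rw [h'] <;> norm_num
    rcases hyb t ht1 (by omega) with h | h
    · have hx1 := hxCu t ht1 (by omega)
      rw [h] at hx1
      rw [h]
      have h3 : 0 ≤ η * V * y (t + 1) := mul_nonneg (mul_nonneg hη0 hV.le) hy1nn
      linarith
    · rcases hyb (t + 1) (by omega) (by omega) with h' | h'
      · have hr := hrd (t + 1) (by omega) (by omega)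
        rw [show t + 1 - 1 = t from by ring, h'] at hr
        have hx1 := hxCu (t + 1) (by omega) (by omega)
        rw [h'] at hx1
        rw [h, h']
        linarith
      · have hx1 := hxCu t ht1 (by omega)
        rw [h] at hx1
        rw [h, h']
        linarith
end

section
/- Let S be a finite set of integers with S ⊆ [0, min{L−1, T−3, ⌊(C̄−V̄)/V⌋}], let η be a real number with 0 ≤ η ≤ min{L−1, (C̄−V̄)/V}, and let t be an integer with 1 ≤ t ≤ T−1 such that t ≥ s+2 for all s ∈ S. If η ∈ {0, (C̄−V̄)/V}, or if η = L−1 and L−1 ∈ S, then there exist 2T affinely independent points of P (viewed as vectors in ℝ^{2T}) each satisfying x_t ≤ (C̄ − η·V)·y_t + η·V·y_{t+1} − Σ_{s∈S} (C̄ − V̄ − s·V)·(y_{t−s} − y_{t−s−1}) with equality; hence this inequality is facet-defining for conv(P). -/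
theorem affineIndependent_of_triangular {k V P ι : Type*} [Field k] [AddCommGroup V]
    [Module k V] [AddTorsor V P] {p : ι → P} (f : ι → P →ᵃ[k] k) (r : ι → ℕ)
    (hdiag : ∀ i, f i (p i) ≠ 0) (hoff : ∀ i j, j ≠ i → r i ≤ r j → f i (p j) = 0) :
    AffineIndependent k p := by
  intro s w hw hvsub i hi
  have hsum : ∀ i, ∑ j ∈ s, w j * f i (p j) = 0 := by
    intro i
    have h := congrArg (f i).linear
      (s.weightedVSub_eq_weightedVSubOfPoint_of_sum_eq_zero w p hw (p i) ▸ hvsub)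
    simpa [Finset.weightedVSubOfPoint_apply, AffineMap.linearMap_vsub, mul_sub,
      Finset.sum_sub_distrib, ← Finset.sum_mul, hw] using h
  induction hn : r i using Nat.strong_induction_on generalizing i with
  | _ n ih =>
    have h := hsum i
    rw [Finset.sum_eq_single_of_mem i hi] at h
    · exact (mul_eq_zero.mp h).resolve_right (hdiag i)
    intro j hj hji
    rcases lt_or_ge (r j) (r i) with hlt | hle
    · rw [ih (r j) (hn ▸ hlt) j hj rfl, zero_mul]
    · rw [hoff i j hji hle, mul_zero]

namespace UnitCommitment

def run (b e : ℤ) (x : ℤ → ℝ) : (ℤ → ℝ) × (ℤ → ℝ) :=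
  (fun i => if b ≤ i ∧ i ≤ e then x i else 0, fun i => if b ≤ i ∧ i ≤ e then 1 else 0)

theorem run_snd_sub_snd_add_one (b e : ℤ) (x : ℤ → ℝ) (j : ℤ) :
    (run b e x).2 j - (run b e x).2 (j + 1) =
      if j = e ∧ b ≤ e then 1 else if j + 1 = b ∧ b ≤ e then -1 else 0 := by
  simp only [run]
  split_ifs <;> first | omega | norm_num

theorem sum_mul_run_snd_sub (S : Finset ℤ) (c : ℤ → ℝ) (b e t : ℤ) (x : ℤ → ℝ) :
    ∑ s ∈ S, c s * ((run b e x).2 (t - s) - (run b e x).2 (t - s - 1)) =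
      (if b ≤ e ∧ t - b ∈ S then c (t - b) else 0) -
        (if b ≤ e ∧ t - e - 1 ∈ S then c (t - e - 1) else 0) := by
  have h : ∀ s, c s * ((run b e x).2 (t - s) - (run b e x).2 (t - s - 1)) =
      (if t - b = s ∧ b ≤ e then c s else 0) -
        (if t - e - 1 = s ∧ b ≤ e then c s else 0) := by
    intro s
    simp only [run]
    split_ifs <;> first | omega | ring
  simp only [h, Finset.sum_sub_distrib, ite_and, Finset.sum_ite_eq]
  split_ifs <;> first | omega | tauto

theorem inP_run {T L Ldn : ℤ} {Cl Cu V Vb : ℝ} {b e : ℤ} {x : ℤ → ℝ}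
    (hCl : 0 ≤ Cl) (hV : 0 ≤ V) (hVb : 0 ≤ Vb)
    (hup : b = 1 ∨ e = T ∨ b + L - 1 ≤ e)
    (hcap : ∀ i, b ≤ i → i ≤ e → Cl ≤ x i ∧ x i ≤ Cu)
    (hramp : ∀ i, b < i → i ≤ e → |x i - x (i - 1)| ≤ V)
    (hstart : 2 ≤ b → b ≤ e → x b ≤ Vb)
    (hstop : e ≤ T - 1 → b ≤ e → x e ≤ Vb) :
    inP T L Ldn Cl Cu V Vb (run b e x).1 (run b e x).2 := by
  have hx : ∀ i, 0 ≤ (run b e x).1 i := fun i => by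
    simp only [run]; split_ifs with h
    exacts [hCl.trans (hcap i h.1 h.2).1, le_rfl]
  refine ⟨fun i _ _ => hx i, ?_, ?_, ?_, ?_, ?_, ?_, ?_⟩ <;> simp only [run]
  · intro i _ _; split_ifs <;> simp
  · intro i k _ _ _ _
    split_ifs <;> first | (exfalso; omega) | norm_num
  · intro i k _ _ _ _
    split_ifs <;> first | (exfalso; omega) | norm_num
  · intro i _ _; split_ifs with h
    exacts [by simpa using (hcap i h.1 h.2).1, by simp]
  · intro i _ _; split_ifs with h
    exacts [by simpa using (hcap i h.1 h.2).2, by simp]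
  · intro i _ _
    split_ifs with hi hi' hi'
    · have := (abs_sub_le_iff.mp (hramp i (by omega) hi.2)).1; linarith
    · have := hstart (by omega) (by omega); rw [show i = b by omega]; linarith
    · have := hx (i - 1); simp only [run, if_pos hi'] at this; linarith
    · linarith
  · intro i _ _
    split_ifs with hi' hi hi
    · have := (abs_sub_le_iff.mp (hramp i (by omega) hi.2)).2; linarith
    · have := hstop (by omega) (by omega); rw [show i - 1 = e by omega]; linarith
    · have := hx i; simp only [run, if_pos hi] at this; linarith
    · linarith

theorem inP_run_const {T L Ldn : ℤ} {Cl Cu V Vb : ℝ} {b e : ℤ} {c : ℝ}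
    (hCl : 0 ≤ Cl) (hV : 0 ≤ V) (hc : Cl ≤ c) (hcVb : c ≤ Vb) (hVbCu : Vb ≤ Cu)
    (hup : b = 1 ∨ e = T ∨ b + L - 1 ≤ e) :
    inP T L Ldn Cl Cu V Vb (run b e fun _ => c).1 (run b e fun _ => c).2 :=
  inP_run hCl hV (by linarith) hup (fun _ _ _ => ⟨hc, hcVb.trans hVbCu⟩)
    (fun _ _ _ => by simpa using hV) (fun _ _ => hcVb) (fun _ _ => hcVb)

def coordAt (T j : ℤ) : (Fin T.toNat → ℝ) →ₗ[ℝ] ℝ :=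
  if h : 1 ≤ j ∧ j ≤ T then LinearMap.proj ⟨(j - 1).toNat, by omega⟩ else 0

theorem coordAt_embed {T j : ℤ} (hj1 : 1 ≤ j) (hjT : j ≤ T)
    (p : (ℤ → ℝ) × (ℤ → ℝ)) :
    coordAt T j (embed T p).1 = p.1 j ∧ coordAt T j (embed T p).2 = p.2 j := by
  have hj : (((j - 1).toNat : ℕ) : ℤ) + 1 = j := by omega
  simp only [coordAt, dif_pos (And.intro hj1 hjT), LinearMap.proj_apply, embed, hj]
  trivial

def facetRhs (S : Finset ℤ) (Cu V Vb η : ℝ) (t : ℤ) (y : ℤ → ℝ) : ℝ :=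
  (Cu - η * V) * y t + η * V * y (t + 1) -
    ∑ s ∈ S, (Cu - Vb - (s : ℝ) * V) * (y (t - s) - y (t - s - 1))

theorem facetRhs_run (S : Finset ℤ) (Cu V Vb η : ℝ) (t b e : ℤ) (x : ℤ → ℝ) :
    facetRhs S Cu V Vb η t (run b e x).2 =
      (Cu - η * V) * (if b ≤ t ∧ t ≤ e then 1 else 0) +
        η * V * (if b ≤ t + 1 ∧ t + 1 ≤ e then 1 else 0) -
        ((if b ≤ e ∧ t - b ∈ S then Cu - Vb - ((t - b : ℤ) : ℝ) * V else 0) -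
          (if b ≤ e ∧ t - e - 1 ∈ S then Cu - Vb - ((t - e - 1 : ℤ) : ℝ) * V
            else 0)) := by
  rw [facetRhs, sum_mul_run_snd_sub S (fun s => Cu - Vb - (s : ℝ) * V)]
  rfl

section FacetPoints

variable (T t : ℤ) (S : Finset ℤ) (Cl Cu V Vb η : ℝ)

def fullPoint (m : ℤ) : (ℤ → ℝ) × (ℤ → ℝ) :=
  run 1 T fun i => if i = m ∧ m ≠ t then Cu - V else Cu

def switchPoint (k : ℤ) : (ℤ → ℝ) × (ℤ → ℝ) :=
  if t < k then run (k + 1) T fun _ => Cl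
  else if t - k - 1 ∈ S then run (k + 1) T fun i => Vb + ((min i t - (k + 1) : ℤ) : ℝ) * V
  else run 1 k fun _ => Cl

-- Index `0` is the off schedule, `1 ≤ m ≤ T` full output with a dip at `m`, and `T + k` the
-- switch between `k` and `k + 1`, with `w` in the role of the switch at `t`.
def facetPoint (w : (ℤ → ℝ) × (ℤ → ℝ)) (m : ℤ) : (ℤ → ℝ) × (ℤ → ℝ) :=
  if m = 0 then run 1 0 0
  else if m ≤ T then fullPoint T t Cu V m
  else if m = T + t then w
  else switchPoint T t S Cl V Vb (m - T)

def facetTest (m : ℤ) (p : (ℤ → ℝ) × (ℤ → ℝ)) : ℝ :=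
  if m = 0 then 1
  else if m ≤ T then (if m = t then p.2 T else p.1 m - Cu * p.2 T)
  else p.2 (m - T) - p.2 (m - T + 1)

def facetFunctional (m : ℤ) : (Fin T.toNat → ℝ) × (Fin T.toNat → ℝ) →ᵃ[ℝ] ℝ :=
  if m = 0 then AffineMap.const ℝ _ 1
  else LinearMap.toAffineMap <|
    if m ≤ T then
      (if m = t then (coordAt T T).comp (LinearMap.snd ℝ _ _)
        else (coordAt T m).comp (LinearMap.fst ℝ _ _) -
          Cu • (coordAt T T).comp (LinearMap.snd ℝ _ _))
    else (coordAt T (m - T) - coordAt T (m - T + 1)).comp (LinearMap.snd ℝ _ _)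

def facetRank (m : ℤ) : ℕ :=
  if m = 0 then 4 else if m ≤ T then (if m = t then 3 else 2) else if m = T + t then 0 else 1

variable {T t S Cl Cu V Vb η}

theorem fullPoint_apply (m j : ℤ) (hj1 : 1 ≤ j) (hjT : j ≤ T) :
    (fullPoint T t Cu V m).1 j = (if j = m ∧ m ≠ t then Cu - V else Cu) ∧
      (fullPoint T t Cu V m).2 j = 1 := by
  simp [fullPoint, run, hj1, hjT]

theorem switchPoint_snd_sub_ne_zero_iff {k j : ℤ} (hj1 : 1 ≤ j) (hjT : j ≤ T - 1) :
    (switchPoint T t S Cl V Vb k).2 j - (switchPoint T t S Cl V Vb k).2 (j + 1) ≠ 0 ↔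
      j = k := by
  unfold switchPoint
  split_ifs <;> rw [run_snd_sub_snd_add_one] <;> split_ifs <;> norm_num <;> omega

theorem inP_fullPoint (L Ldn : ℤ) (hCl : 0 ≤ Cl) (hV : 0 ≤ V) (hVb : 0 ≤ Vb)
    (hVCu : Cl + V ≤ Cu) (m : ℤ) :
    inP T L Ldn Cl Cu V Vb (fullPoint T t Cu V m).1 (fullPoint T t Cu V m).2 := by
  refine inP_run hCl hV hVb (Or.inl rfl) (fun i _ _ => ?_) (fun i _ _ => ?_)
    (fun h _ => by omega) (fun h _ => by omega)
  · constructor <;> split_ifs <;> linarith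
  · split_ifs <;> simp [abs_of_nonneg, hV]

theorem fullPoint_fst_eq_facetRhs (hS : ∀ s ∈ S, 0 ≤ s ∧ s + 2 ≤ t) (ht1 : 1 ≤ t)
    (ht2 : t ≤ T - 1) (m : ℤ) :
    (fullPoint T t Cu V m).1 t = facetRhs S Cu V Vb η t (fullPoint T t Cu V m).2 := by
  have h1 : t - 1 ∉ S := fun h => by have := hS _ h; omega
  have h2 : t - T - 1 ∉ S := fun h => by have := hS _ h; omega
  have h3 : ¬(t = m ∧ m ≠ t) := fun h => h.2 h.1.symm
  rw [fullPoint, facetRhs_run]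
  simp [run, h1, h2, h3, ht1, (by omega : t ≤ T), (by omega : 0 ≤ t), (by omega : t < T)]

theorem inP_run_ramp (L Ldn : ℤ) (hCl : 0 ≤ Cl) (hV : 0 ≤ V) (hClVb : Cl ≤ Vb) {b : ℤ}
    (hbt : b ≤ t) (hcap : ((t - b : ℤ) : ℝ) * V ≤ Cu - Vb) :
    inP T L Ldn Cl Cu V Vb (run b T fun i => Vb + ((min i t - b : ℤ) : ℝ) * V).1
      (run b T fun i => Vb + ((min i t - b : ℤ) : ℝ) * V).2 := by
  refine inP_run hCl hV (hCl.trans hClVb) (Or.inr (Or.inl rfl)) (fun i hi _ => ?_)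
    (fun i hi _ => ?_) (fun _ _ => by simp [min_eq_left hbt]) (fun h _ => by omega)
  · have h0 : (0 : ℝ) ≤ ((min i t - b : ℤ) : ℝ) := by
      exact_mod_cast (by omega : 0 ≤ min i t - b)
    have h1 : ((min i t - b : ℤ) : ℝ) ≤ ((t - b : ℤ) : ℝ) := by exact_mod_cast (by omega)
    constructor <;> nlinarith
  · rcases (by omega : min i t = min (i - 1) t ∨ min i t = min (i - 1) t + 1) with h | h <;>
      rw [h] <;> push_cast <;> ring_nf <;> simp [abs_of_nonneg, hV]

theorem inP_switchPoint (L Ldn : ℤ) (hCl : 0 ≤ Cl) (hV : 0 ≤ V) (hClVb : Cl ≤ Vb)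
    (hVbCu : Vb ≤ Cu) (hS : ∀ s ∈ S, 0 ≤ s ∧ (s : ℝ) * V ≤ Cu - Vb) (k : ℤ) :
    inP T L Ldn Cl Cu V Vb (switchPoint T t S Cl V Vb k).1 (switchPoint T t S Cl V Vb k).2 := by
  unfold switchPoint
  split_ifs with hkt hk
  · exact inP_run_const hCl hV le_rfl hClVb hVbCu (Or.inr (Or.inl rfl))
  · exact inP_run_ramp L Ldn hCl hV hClVb (by have := (hS _ hk).1; omega)
      (by have := (hS _ hk).2; rwa [show t - (k + 1) = t - k - 1 by ring])
  · exact inP_run_const hCl hV le_rfl hClVb hVbCu (Or.inl rfl)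

theorem switchPoint_fst_eq_facetRhs (hS : ∀ s ∈ S, 0 ≤ s ∧ s + 2 ≤ t) (ht2 : t ≤ T - 1)
    {k : ℤ} (hkt : k ≠ t) :
    (switchPoint T t S Cl V Vb k).1 t =
      facetRhs S Cu V Vb η t (switchPoint T t S Cl V Vb k).2 := by
  have h1 : t - 1 ∉ S := fun h => by have := hS _ h; omega
  have h2 : t - T - 1 ∉ S := fun h => by have := hS _ h; omega
  unfold switchPoint
  split_ifs with htk hk
  · have h3 : t - (k + 1) ∉ S := fun h => by have := hS _ h; omega
    rw [facetRhs_run]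
    simp only [run, h2, h3, and_false, if_false]
    split_ifs <;> first | (exfalso; omega) | ring
  · have := hS _ hk
    rw [facetRhs_run, show t - (k + 1) = t - k - 1 by ring]
    simp only [run, h2, hk, and_false, and_true, if_false, min_self]
    split_ifs <;> first | (exfalso; omega) | (push_cast; ring)
  · rw [facetRhs_run]
    simp only [run, h1, hk, and_false, if_false]
    split_ifs <;> first | (exfalso; omega) | ring

theorem facetFunctional_embed {m : ℤ} (hm0 : 0 ≤ m) (hm : m < 2 * T)
    (p : (ℤ → ℝ) × (ℤ → ℝ)) :
    facetFunctional T t Cu m (embed T p) = facetTest T t Cu m p := by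
  unfold facetFunctional facetTest
  split_ifs with h0 hT ht
  · rfl
  all_goals simp only [LinearMap.coe_toAffineMap, LinearMap.sub_apply, LinearMap.smul_apply,
    LinearMap.comp_apply, LinearMap.fst_apply, LinearMap.snd_apply, smul_eq_mul]
  · exact (coordAt_embed (by omega) le_rfl p).2
  · rw [(coordAt_embed (by omega) hT p).1, (coordAt_embed (by omega) le_rfl p).2]
  · rw [(coordAt_embed (by omega) (by omega) p).2, (coordAt_embed (by omega) (by omega) p).2]

theorem facetTest_facetPoint_self (hV : V ≠ 0) {w : (ℤ → ℝ) × (ℤ → ℝ)}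
    (hw : w.2 t ≠ w.2 (t + 1)) {m : ℤ} (hm0 : 0 ≤ m) (hm : m < 2 * T) :
    facetTest T t Cu m (facetPoint T t S Cl Cu V Vb w m) ≠ 0 := by
  unfold facetTest facetPoint
  split_ifs with h0 hT hmt hmw
  · exact one_ne_zero
  · simp [(fullPoint_apply m T (by omega) le_rfl).2]
  · rw [(fullPoint_apply m m (by omega) hT).1, (fullPoint_apply m T (by omega) le_rfl).2]
    simpa [hmt, Ne.symm hmt] using hV
  · rwa [show m - T = t by omega, sub_ne_zero]
  · exact (switchPoint_snd_sub_ne_zero_iff (by omega) (by omega)).2 rfl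

theorem facetTest_facetPoint_eq_zero (w : (ℤ → ℝ) × (ℤ → ℝ)) {m m' : ℤ} (hm0 : 0 ≤ m)
    (hm : m < 2 * T) (hm' : m' < 2 * T) (hne : m' ≠ m)
    (hrank : facetRank T t m ≤ facetRank T t m') :
    facetTest T t Cu m (facetPoint T t S Cl Cu V Vb w m') = 0 := by
  unfold facetRank at hrank
  unfold facetTest facetPoint
  split_ifs at hrank ⊢ <;> first
    | omega
    | (by_contra h
       have := (switchPoint_snd_sub_ne_zero_iff (by omega) (by omega)).1 h
       omega)
    | (simp only [fullPoint, run]; split_ifs <;> first | (exfalso; omega) | ring)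

theorem affineIndependent_facetPoint (hV : V ≠ 0) {w : (ℤ → ℝ) × (ℤ → ℝ)}
    (hw : w.2 t ≠ w.2 (t + 1)) :
    AffineIndependent ℝ fun i : Fin (2 * T.toNat) =>
      embed T (facetPoint T t S Cl Cu V Vb w (i : ℕ)) := by
  have hrange (i : Fin (2 * T.toNat)) : 0 ≤ ((i : ℕ) : ℤ) ∧ ((i : ℕ) : ℤ) < 2 * T := by
    have := i.isLt; omega
  refine affineIndependent_of_triangular (fun i => facetFunctional T t Cu (i : ℕ))
    (fun i => facetRank T t (i : ℕ)) (fun i => ?_) (fun i j hji hrank => ?_)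
  · rw [facetFunctional_embed (hrange i).1 (hrange i).2]
    exact facetTest_facetPoint_self hV hw (hrange i).1 (hrange i).2
  · rw [facetFunctional_embed (hrange i).1 (hrange i).2]
    exact facetTest_facetPoint_eq_zero w (hrange i).1 (hrange i).2 (hrange j).2
      (fun h => hji (Fin.ext (by exact_mod_cast h))) hrank

theorem facetPoint_mem (L Ldn : ℤ) (hCl : 0 ≤ Cl) (hV : 0 ≤ V) (hClVb : Cl ≤ Vb)
    (hVbCu : Vb + V ≤ Cu) (hS : ∀ s ∈ S, 0 ≤ s ∧ s + 2 ≤ t ∧ (s : ℝ) * V ≤ Cu - Vb)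
    (ht1 : 1 ≤ t) (ht2 : t ≤ T - 1) {w : (ℤ → ℝ) × (ℤ → ℝ)}
    (hwP : inP T L Ldn Cl Cu V Vb w.1 w.2)
    (hwF : w.1 t = facetRhs S Cu V Vb η t w.2) (m : ℤ) :
    inP T L Ldn Cl Cu V Vb (facetPoint T t S Cl Cu V Vb w m).1
        (facetPoint T t S Cl Cu V Vb w m).2 ∧
      (facetPoint T t S Cl Cu V Vb w m).1 t =
        facetRhs S Cu V Vb η t (facetPoint T t S Cl Cu V Vb w m).2 := by
  have hS' : ∀ s ∈ S, 0 ≤ s ∧ s + 2 ≤ t := fun s hs => ⟨(hS s hs).1, (hS s hs).2.1⟩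
  unfold facetPoint
  split_ifs with h0 hT hw
  · refine ⟨inP_run hCl hV (by linarith) (Or.inl rfl) (fun _ _ _ => by omega)
      (fun _ _ _ => by omega) (fun h _ => by omega) (fun _ h => by omega), ?_⟩
    rw [facetRhs_run]
    simp only [run]
    split_ifs <;> first | (exfalso; omega) | ring
  · exact ⟨inP_fullPoint L Ldn hCl hV (by linarith) (by linarith) m,
      fullPoint_fst_eq_facetRhs hS' ht1 ht2 m⟩
  · exact ⟨hwP, hwF⟩
  · exact ⟨inP_switchPoint L Ldn hCl hV hClVb (by linarith)
      (fun s hs => ⟨(hS s hs).1, (hS s hs).2.2⟩) (m - T),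
      switchPoint_fst_eq_facetRhs hS' ht2 (by omega)⟩

theorem exists_switch_mem_facet (L Ldn : ℤ) (hCl : 0 ≤ Cl) (hV : 0 < V) (hClVb : Cl ≤ Vb)
    (hVbCu : Vb ≤ Cu)
    (hS : ∀ s ∈ S, 0 ≤ s ∧ s + 2 ≤ t) (ht1 : 1 ≤ t) (ht2 : t ≤ T - 1)
    (hη : (η = 0 ∨ η = (Cu - Vb) / V) ∨ (η = (L : ℝ) - 1 ∧ L - 1 ∈ S)) :
    ∃ w : (ℤ → ℝ) × (ℤ → ℝ), inP T L Ldn Cl Cu V Vb w.1 w.2 ∧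
      w.1 t = facetRhs S Cu V Vb η t w.2 ∧ w.2 t ≠ w.2 (t + 1) := by
  have hneg : t - t - 1 ∉ S := fun h => by have := hS _ h; omega
  have hlast : t - T - 1 ∉ S := fun h => by have := hS _ h; omega
  rcases hη with (rfl | rfl) | ⟨rfl, hL⟩
  · refine ⟨run (t + 1) T fun _ => Cl,
      inP_run_const hCl hV.le le_rfl hClVb hVbCu (Or.inr (Or.inl rfl)), ?_, ?_⟩
    · have : t - (t + 1) ∉ S := fun h => by have := hS _ h; omega
      rw [facetRhs_run]
      simp only [run, this, hlast, and_false, if_false]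
      split_ifs <;> first | (exfalso; omega) | ring
    · simp only [run]
      split_ifs <;> first | (exfalso; omega) | norm_num
  · refine ⟨run 1 t fun _ => Vb,
      inP_run_const hCl hV.le hClVb le_rfl hVbCu (Or.inl rfl), ?_, ?_⟩
    · have : t - 1 ∉ S := fun h => by have := hS _ h; omega
      rw [facetRhs_run]
      simp only [run, this, hneg, and_false, if_false]
      split_ifs <;> first | (exfalso; omega) | (field_simp; ring)
    · simp only [run]
      split_ifs <;> first | (exfalso; omega) | norm_num
  · have := hS _ hL
    refine ⟨run (t - L + 1) t fun _ => Vb,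
      inP_run_const hCl hV.le hClVb le_rfl hVbCu (Or.inr (Or.inr (by omega))), ?_, ?_⟩
    · rw [facetRhs_run, show t - (t - L + 1) = L - 1 by ring]
      simp only [run, hL, hneg, and_false, and_true, if_false]
      split_ifs <;> first | (exfalso; omega) | (push_cast; ring)
    · simp only [run]
      split_ifs <;> first | (exfalso; omega) | norm_num

end FacetPoints

end UnitCommitment

theorem stmt_11_general (T L Ldn : ℤ) (Cl Cu V Vb : ℝ)
    (hCl : 0 < Cl) (hV : 0 < V)
    (hVVb : Vb + V ≤ Cu) (hVb1 : Cl < Vb)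
    (S : Finset ℤ)
    (hS : S ⊆ Finset.Icc 0 (min (min (L - 1) (T - 3)) ⌊(Cu - Vb) / V⌋))
    (η : ℝ)
    (t : ℤ) (ht1 : 1 ≤ t) (ht2 : t ≤ T - 1) (htS : ∀ s ∈ S, s + 2 ≤ t)
    (hfacet : (η = 0 ∨ η = (Cu - Vb) / V) ∨ (η = (L : ℝ) - 1 ∧ L - 1 ∈ S)) :
    ∃ p : Fin (2 * T.toNat) → (ℤ → ℝ) × (ℤ → ℝ),
      (∀ i, inP T L Ldn Cl Cu V Vb (p i).1 (p i).2 ∧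
        (p i).1 t = (Cu - η * V) * (p i).2 t + η * V * (p i).2 (t + 1) -
          ∑ s ∈ S, (Cu - Vb - (s : ℝ) * V) * ((p i).2 (t - s) - (p i).2 (t - s - 1))) ∧
      AffineIndependent ℝ (fun i => embed T (p i)) := by
  have hS' (s : ℤ) (hs : s ∈ S) : 0 ≤ s ∧ s + 2 ≤ t ∧ (s : ℝ) * V ≤ Cu - Vb := by
    have h := Finset.mem_Icc.mp (hS hs)
    have hfloor := Int.le_floor.mp (h.2.trans (min_le_right _ _))
    exact ⟨h.1, htS s hs, (le_div_iff₀ hV).mp hfloor⟩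
  obtain ⟨w, hwP, hwF, hwt⟩ := UnitCommitment.exists_switch_mem_facet L Ldn hCl.le hV hVb1.le
    ((le_add_of_nonneg_right hV.le).trans hVVb)
    (fun s hs => ⟨(hS' s hs).1, (hS' s hs).2.1⟩) ht1 ht2 hfacet
  exact ⟨fun i => UnitCommitment.facetPoint T t S Cl Cu V Vb w (i : ℕ),
    fun i => UnitCommitment.facetPoint_mem L Ldn hCl.le hV.le hVb1.le hVVb hS' ht1 ht2 hwP hwF _,
    UnitCommitment.affineIndependent_facetPoint hV.ne' hwt⟩

theorem stmt_11 (T L Ldn : ℤ) (Cl Cu V Vb : ℝ)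
    (hT : 1 ≤ T) (hL : 1 ≤ L) (hLdn : 1 ≤ Ldn)
    (hCl : 0 < Cl) (hCu : Cl < Cu) (hV : 0 < V)
    (hVVb : Vb + V ≤ Cu) (hVb1 : Cl < Vb) (hVb2 : Vb < Cl + V)
    (S : Finset ℤ)
    (hS : S ⊆ Finset.Icc 0 (min (min (L - 1) (T - 3)) ⌊(Cu - Vb) / V⌋))
    (η : ℝ) (hη0 : 0 ≤ η) (hη1 : η ≤ min ((L : ℝ) - 1) ((Cu - Vb) / V))
    (t : ℤ) (ht1 : 1 ≤ t) (ht2 : t ≤ T - 1) (htS : ∀ s ∈ S, s + 2 ≤ t)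
    (hfacet : (η = 0 ∨ η = (Cu - Vb) / V) ∨ (η = (L : ℝ) - 1 ∧ L - 1 ∈ S)) :
    ∃ p : Fin (2 * T.toNat) → (ℤ → ℝ) × (ℤ → ℝ),
      (∀ i, inP T L Ldn Cl Cu V Vb (p i).1 (p i).2 ∧
        (p i).1 t = (Cu - η * V) * (p i).2 t + η * V * (p i).2 (t + 1) -
          ∑ s ∈ S, (Cu - Vb - (s : ℝ) * V) * ((p i).2 (t - s) - (p i).2 (t - s - 1))) ∧
      AffineIndependent ℝ (fun i => embed T (p i)) :=
  stmt_11_general T L Ldn Cl Cu V Vb hCl hV hVVb hVb1 S hS η t ht1 ht2 htS hfacet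
end

section
/- Let η be a real number with 0 ≤ η ≤ min{L−1, (C̄−V̄)/V} and let α, β, s_max be integers such that (a) L ≤ s_max ≤ min{T−3, ⌊(C̄−V̄)/V⌋}, (b) 0 ≤ α < β ≤ s_max, and (c) β = α+1 or s_max ≤ L+α. Let S = [0,α] ∪ [β, s_max] (an interval union of integers). Then for any integer t with s_max+2 ≤ t ≤ T−1, every (x, y) ∈ P satisfies x_t ≤ (C̄ − η·V)·y_t + η·V·y_{t+1} − Σ_{s∈S} (C̄ − V̄ − s·V)·(y_{t−s} − y_{t−s−1}). -/
theorem stmt_12 (T L Ldn : ℤ) (Cl Cu V Vb : ℝ)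
    (hT : 1 ≤ T) (hL : 1 ≤ L) (hLdn : 1 ≤ Ldn)
    (hCl : 0 < Cl) (hCu : Cl < Cu) (hV : 0 < V)
    (hVVb : Vb + V ≤ Cu) (hVb1 : Cl < Vb) (hVb2 : Vb < Cl + V)
    (η : ℝ) (hη0 : 0 ≤ η) (hη1 : η ≤ min ((L : ℝ) - 1) ((Cu - Vb) / V))
    (α β smax : ℤ) (hs1 : L ≤ smax) (hs2 : smax ≤ min (T - 3) ⌊(Cu - Vb) / V⌋)
    (hα : 0 ≤ α) (hαβ : α < β) (hβ : β ≤ smax)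
    (hc : β = α + 1 ∨ smax ≤ L + α)
    (t : ℤ) (ht1 : smax + 2 ≤ t) (ht2 : t ≤ T - 1)
    (x y : ℤ → ℝ) (hxy : inP T L Ldn Cl Cu V Vb x y) :
    x t ≤ (Cu - η * V) * y t + η * V * y (t + 1) -
      ∑ s ∈ Finset.Icc 0 α ∪ Finset.Icc β smax,
        (Cu - Vb - (s : ℝ) * V) * (y (t - s) - y (t - s - 1)) := by
  classical
  obtain ⟨hx0, hybin, hup, hdn, hlb, hub, hru, hrd⟩ := hxy
  have hsmT : smax ≤ T - 3 := le_trans hs2 (min_le_left _ _)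
  have hsmV : (smax : ℝ) * V ≤ Cu - Vb := by
    have h1 : (smax : ℝ) ≤ (Cu - Vb) / V := Int.le_floor.mp (le_trans hs2 (min_le_right _ _))
    calc (smax:ℝ) * V ≤ ((Cu - Vb)/V) * V := by nlinarith
    _ = Cu - Vb := by field_simp
  have hηL : η ≤ (L:ℝ) - 1 := le_trans hη1 (min_le_left _ _)
  have hηV : η * V ≤ Cu - Vb := by
    have h1 : η ≤ (Cu - Vb)/V := le_trans hη1 (min_le_right _ _)
    calc η * V ≤ ((Cu - Vb)/V) * V := by nlinarith
    _ = Cu - Vb := by field_simp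
  have hαs : α ≤ smax := by omega
  have hcpos : ∀ s : ℤ, s ≤ smax → 0 ≤ Cu - Vb - (s:ℝ) * V := by
    intro s hs
    have h1 : (s:ℝ) ≤ (smax:ℝ) := by exact_mod_cast hs
    nlinarith
  have hyb : ∀ s : ℤ, 1 ≤ s → s ≤ T → y s = 0 ∨ y s = 1 := hybin
  have hynn : ∀ s : ℤ, 1 ≤ s → s ≤ T → 0 ≤ y s := by
    intro s h1 h2; rcases hyb s h1 h2 with h | h <;> rw [h] <;> norm_num
  have hstart : ∀ τ k : ℤ, 2 ≤ τ → τ ≤ T → τ ≤ k → k ≤ T → k ≤ τ + L - 1 →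
      y (τ - 1) = 0 → y τ = 1 → (1:ℝ) ≤ y k := by
    intro τ k h2 hT' hk1 hk2 hk3 hy0 hy1
    have h := hup τ k h2 hT' hk1 (le_min hk2 hk3)
    rw [hy0, hy1] at h; linarith
  -- key downward induction claim
  have claim : ∀ n : ℕ, ∀ m : ℤ, 0 ≤ m → m ≤ smax + 1 → smax + 1 - m ≤ (n:ℤ) →
      (∑ s ∈ Finset.Icc m smax, if s ∈ Finset.Icc 0 α ∪ Finset.Icc β smax then
        (Cu - Vb - (s:ℝ) * V) * (y (t - s) - y (t - s - 1)) else 0)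
      ≤ max (Cu - Vb - (m:ℝ) * V) 0 * y (t - m) := by
    intro n
    induction n with
    | zero =>
      intro m h0 h1 h2
      rw [Finset.Icc_eq_empty (by omega), Finset.sum_empty]
      exact mul_nonneg (le_max_right _ _) (hynn _ (by omega) (by omega))
    | succ n ih =>
      intro m h0 h1 h2
      by_cases hms : smax + 1 ≤ m
      · rw [Finset.Icc_eq_empty (by omega), Finset.sum_empty]
        exact mul_nonneg (le_max_right _ _) (hynn _ (by omega) (by omega))
      push_neg at hms
      have hmle : m ≤ smax := by omega
      have hins : Finset.Icc m smax = insert m (Finset.Icc (m+1) smax) := by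
        ext z; simp only [Finset.mem_Icc, Finset.mem_insert]; omega
      have hnot : m ∉ Finset.Icc (m+1) smax := by simp
      rw [hins, Finset.sum_insert hnot]
      have hIH := ih (m+1) (by omega) (by omega) (by omega)
      rw [show t - (m+1) = t - m - 1 by ring] at hIH
      push_cast at hIH
      have hcm : 0 ≤ Cu - Vb - (m:ℝ)*V := hcpos m hmle
      have hBnn : 0 ≤ y (t - m - 1) := hynn _ (by omega) (by omega)
      have hAnn : 0 ≤ y (t - m) := hynn _ (by omega) (by omega)
      have hmaxle : max (Cu - Vb - ((m:ℝ)+1)*V) 0 ≤ Cu - Vb - (m:ℝ)*V :=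
        max_le (by nlinarith) hcm
      by_cases hmem : m ∈ Finset.Icc 0 α ∪ Finset.Icc β smax
      · rw [if_pos hmem, max_eq_left hcm]
        have h3 : max (Cu - Vb - ((m:ℝ)+1)*V) 0 * y (t-m-1)
            ≤ (Cu - Vb - (m:ℝ)*V) * y (t-m-1) :=
          mul_le_mul_of_nonneg_right hmaxle hBnn
        nlinarith [hIH]
      · rw [if_neg hmem, zero_add]
        have hgap : α < m ∧ m < β := by
          simp only [Finset.mem_union, Finset.mem_Icc] at hmem
          omega
        rcases hyb (t - m - 1) (by omega) (by omega) with hB | hB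
        · rw [hB, mul_zero] at hIH
          exact le_trans hIH (mul_nonneg (le_max_right _ _) hAnn)
        · rcases hyb (t - m) (by omega) (by omega) with hA | hA
          · -- shutdown inside the gap
            rcases hc with hc1 | hc2
            · omega
            · have hall : ∀ s, m + 1 ≤ s → s ≤ smax + 1 → y (t - s) = 1 := by
                have base : m + 1 ≤ smax + 1 → y (t - (m+1)) = 1 := by
                  intro _; rw [show t - (m+1) = t - m - 1 by ring]; exact hB
                have step : ∀ s, m + 1 ≤ s → (s ≤ smax + 1 → y (t - s) = 1) →
                    (s + 1 ≤ smax + 1 → y (t - (s+1)) = 1) := by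
                  intro s hs ihs hs1
                  have hys : y (t - s) = 1 := ihs (by omega)
                  rcases hyb (t - (s+1)) (by omega) (by omega) with hz | ho
                  · exfalso
                    have hk := hstart (t - s) (t - m) (by omega) (by omega) (by omega)
                      (by omega) (by omega)
                      (by rw [show t - s - 1 = t - (s+1) by ring]; exact hz) hys
                    rw [hA] at hk; linarith
                  · exact ho
                exact fun s hs => Int.le_induction base step s hs
              have hzero : (∑ s ∈ Finset.Icc (m+1) smax,
                  if s ∈ Finset.Icc 0 α ∪ Finset.Icc β smax then
                    (Cu - Vb - (s:ℝ) * V) * (y (t - s) - y (t - s - 1)) else 0) = 0 := by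
                apply Finset.sum_eq_zero
                intro s hs
                rw [Finset.mem_Icc] at hs
                have h1 := hall s hs.1 (by omega)
                have h2 := hall (s+1) (by omega) (by omega)
                rw [show t - (s+1) = t - s - 1 by ring] at h2
                rw [h1, h2]
                split_ifs <;> ring
              rw [hzero, hA, mul_zero]
          · rw [hB, mul_one] at hIH
            rw [hA, mul_one]
            exact le_trans hIH (le_trans hmaxle (le_max_left _ _))
  have hSsub : Finset.Icc (0:ℤ) α ∪ Finset.Icc β smax ⊆ Finset.Icc 0 smax := by
    intro z hz
    simp only [Finset.mem_union, Finset.mem_Icc] at hz ⊢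
    omega
  have hSeq : (∑ s ∈ Finset.Icc (0:ℤ) smax, if s ∈ Finset.Icc 0 α ∪ Finset.Icc β smax then
      (Cu - Vb - (s:ℝ) * V) * (y (t - s) - y (t - s - 1)) else 0)
      = ∑ s ∈ Finset.Icc 0 α ∪ Finset.Icc β smax,
        (Cu - Vb - (s:ℝ) * V) * (y (t - s) - y (t - s - 1)) := by
    rw [Finset.sum_ite_mem, Finset.inter_eq_right.mpr hSsub]
  rcases hyb t (by omega) (by omega) with hyt | hyt
  · -- y t = 0
    have hxt : x t ≤ 0 := by
      have h := hub t (by omega) (by omega); rw [hyt] at h; linarith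
    have hG := claim (smax+1).toNat 0 le_rfl (by omega) (by omega)
    rw [sub_zero, hyt, mul_zero] at hG
    have hy1nn : 0 ≤ y (t+1) := hynn _ (by omega) (by omega)
    rw [← hSeq, hyt]
    nlinarith [mul_nonneg (mul_nonneg hη0 hV.le) hy1nn]
  · -- y t = 1
    have hPex : ∃ n : ℕ, smax + 1 ≤ (n:ℤ) ∨ y (t - n - 1) = 0 :=
      ⟨(smax+1).toNat, Or.inl (by omega)⟩
    set u : ℤ := ((Nat.find hPex : ℕ) : ℤ) with hu_def
    have hu0 : 0 ≤ u := by omega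
    have huB : u ≤ smax + 1 := by
      have h := Nat.find_min' hPex (m := (smax+1).toNat) (Or.inl (by omega))
      omega
    have hmin : ∀ s : ℤ, 0 ≤ s → s < u → y (t - s - 1) ≠ 0 := by
      intro s h0 hlt hy0
      refine Nat.find_min hPex (m := s.toNat) (by omega) ?_
      right
      rw [Int.toNat_of_nonneg h0]
      exact hy0
    have hyu : ∀ s : ℤ, 0 ≤ s → s ≤ u → y (t - s) = 1 := by
      have base : (0:ℤ) ≤ u → y (t - 0) = 1 := by
        intro _; rw [sub_zero]; exact hyt
      have step : ∀ s : ℤ, 0 ≤ s → (s ≤ u → y (t - s) = 1) →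
          (s + 1 ≤ u → y (t - (s+1)) = 1) := by
        intro s h0 ihs hs1
        rcases hyb (t - (s+1)) (by omega) (by omega) with h | h
        · exfalso; apply hmin s h0 (by omega)
          rw [show t - s - 1 = t - (s+1) by ring]; exact h
        · exact h
      exact fun s h0 => Int.le_induction base step s h0
    by_cases hus : u ≤ smax
    · -- the unit started up at time t - u
      have huy0 : y (t - u - 1) = 0 := by
        rcases Nat.find_spec hPex with h | h
        · omega
        · rwa [← hu_def] at h
      have hchain : ∀ j : ℤ, 0 ≤ j → j ≤ u → x (t - u + j) ≤ Vb + (j:ℝ) * V := by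
        have base : (0:ℤ) ≤ u → x (t - u + 0) ≤ Vb + ((0:ℤ):ℝ) * V := by
          intro _
          have h1 := hru (t - u) (by omega) (by omega)
          have h2 := hub (t - u - 1) (by omega) (by omega)
          rw [huy0] at h1 h2
          rw [show t - u + 0 = t - u by ring]
          push_cast
          linarith
        have step : ∀ j : ℤ, 0 ≤ j → (j ≤ u → x (t - u + j) ≤ Vb + (j:ℝ) * V) →
            (j + 1 ≤ u → x (t - u + (j+1)) ≤ Vb + ((j+1:ℤ):ℝ) * V) := by
          intro j h0 ihj hj1
          have hxj := ihj (by omega)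
          have h1 := hru (t - u + j + 1) (by omega) (by omega)
          have h2 : y (t - u + j + 1 - 1) = 1 := by
            rw [show t - u + j + 1 - 1 = t - (u - j) by ring]
            exact hyu (u - j) (by omega) (by omega)
          rw [h2, show t - u + j + 1 - 1 = t - u + j by ring] at h1
          rw [show t - u + (j+1) = t - u + j + 1 by ring]
          push_cast at hxj ⊢
          linarith
        exact fun j h0 => Int.le_induction base step j h0
      have hxt : x t ≤ Vb + (u:ℝ) * V := by
        have h := hchain u hu0 le_rfl
        rwa [show t - u + u = t by ring] at h
      have hyuu : y (t - u) = 1 := hyu u hu0 le_rfl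
      have hSum_u : (∑ s ∈ Finset.Icc (0:ℤ) smax,
          if s ∈ Finset.Icc 0 α ∪ Finset.Icc β smax then
            (Cu - Vb - (s:ℝ) * V) * (y (t - s) - y (t - s - 1)) else 0)
          ≤ Cu - Vb - (u:ℝ) * V := by
        have hsplit : Finset.Icc (0:ℤ) smax = Finset.Icc 0 (u-1) ∪ Finset.Icc u smax := by
          ext z; simp only [Finset.mem_Icc, Finset.mem_union]; omega
        have hdisj : Disjoint (Finset.Icc (0:ℤ) (u-1)) (Finset.Icc u smax) := by
          rw [Finset.disjoint_left]; intro z hz1 hz2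
          simp only [Finset.mem_Icc] at hz1 hz2; omega
        rw [hsplit, Finset.sum_union hdisj]
        have hzero1 : (∑ s ∈ Finset.Icc (0:ℤ) (u-1),
            if s ∈ Finset.Icc 0 α ∪ Finset.Icc β smax then
              (Cu - Vb - (s:ℝ) * V) * (y (t - s) - y (t - s - 1)) else 0) = 0 := by
          apply Finset.sum_eq_zero
          intro s hs
          rw [Finset.mem_Icc] at hs
          have h1 := hyu s hs.1 (by omega)
          have h2 := hyu (s+1) (by omega) (by omega)
          rw [show t - (s+1) = t - s - 1 by ring] at h2
          rw [h1, h2]; split_ifs <;> ring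
        rw [hzero1, zero_add]
        have hins : Finset.Icc u smax = insert u (Finset.Icc (u+1) smax) := by
          ext z; simp only [Finset.mem_Icc, Finset.mem_insert]; omega
        rw [hins, Finset.sum_insert (by simp)]
        have hG := claim (smax+1).toNat (u+1) (by omega) (by omega) (by omega)
        rw [show t - (u+1) = t - u - 1 by ring, huy0, mul_zero] at hG
        have hcu : 0 ≤ Cu - Vb - (u:ℝ) * V := hcpos u hus
        rw [hyuu, huy0]
        split_ifs with h
        · linarith
        · linarith
      rw [← hSeq, hyt]
      rcases hyb (t+1) (by omega) (by omega) with hyt1 | hyt1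
      · -- y (t+1) = 0
        have hxtb : x t ≤ Vb := by
          have h1 := hrd (t+1) (by omega) (by omega)
          rw [show t + 1 - 1 = t by ring, hyt1] at h1
          have h2 := hub (t+1) (by omega) (by omega)
          rw [hyt1] at h2
          linarith
        have huL : L - 1 ≤ u := by
          by_contra hL'
          push_neg at hL'
          have h1 := hstart (t - u) (t + 1) (by omega) (by omega) (by omega) (by omega)
            (by omega) huy0 hyuu
          rw [hyt1] at h1; linarith
        have huLr : η ≤ (u:ℝ) := by
          have h1 : ((L:ℝ) - 1) ≤ (u:ℝ) := by exact_mod_cast (by omega : L - 1 ≤ u)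
          linarith
        have h2 : η * V ≤ (u:ℝ) * V := mul_le_mul_of_nonneg_right huLr hV.le
        rw [hyt1]
        linarith
      · rw [hyt1]
        linarith
    · -- the unit has been on throughout the window
      have hueq : u = smax + 1 := by omega
      have hSum0 : (∑ s ∈ Finset.Icc (0:ℤ) smax,
          if s ∈ Finset.Icc 0 α ∪ Finset.Icc β smax then
            (Cu - Vb - (s:ℝ) * V) * (y (t - s) - y (t - s - 1)) else 0) = 0 := by
        apply Finset.sum_eq_zero
        intro s hs
        rw [Finset.mem_Icc] at hs
        have h1 := hyu s hs.1 (by omega)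
        have h2 := hyu (s+1) (by omega) (by omega)
        rw [show t - (s+1) = t - s - 1 by ring] at h2
        rw [h1, h2]; split_ifs <;> ring
      rw [← hSeq, hSum0, hyt]
      rcases hyb (t+1) (by omega) (by omega) with hyt1 | hyt1
      · have hxtb : x t ≤ Vb := by
          have h1 := hrd (t+1) (by omega) (by omega)
          rw [show t + 1 - 1 = t by ring, hyt1] at h1
          have h2 := hub (t+1) (by omega) (by omega)
          rw [hyt1] at h2
          linarith
        rw [hyt1]
        linarith
      · have h := hub t (by omega) (by omega)
        rw [hyt] at h
        rw [hyt1]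
        linarith
end

section
/- Let S be a finite set of integers with S ⊆ [1, min{L, T−2, ⌊(C̄−V̄)/V⌋}], let η be a real number with 0 ≤ η ≤ min{L, (C̄−V̄)/V}, and let t be an integer with 2 ≤ t ≤ T such that t ≥ s+2 for all s ∈ S. Then every (x, y) ∈ P satisfies x_t ≤ (V̄ + η·V)·y_t + (C̄ − V̄ − η·V)·y_{t−1} − Σ_{s∈S} (C̄ − V̄ − s·V)·(y_{t−s} − y_{t−s−1}). -/
theorem stmt_13 (T L Ldn : ℤ) (Cl Cu V Vb : ℝ)
    (hT : 1 ≤ T) (hL : 1 ≤ L) (hLdn : 1 ≤ Ldn)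
    (hCl : 0 < Cl) (hCu : Cl < Cu) (hV : 0 < V)
    (hVVb : Vb + V ≤ Cu) (hVb1 : Cl < Vb) (hVb2 : Vb < Cl + V)
    (S : Finset ℤ)
    (hS : S ⊆ Finset.Icc 1 (min (min L (T - 2)) ⌊(Cu - Vb) / V⌋))
    (η : ℝ) (hη0 : 0 ≤ η) (hη1 : η ≤ min (L : ℝ) ((Cu - Vb) / V))
    (t : ℤ) (ht1 : 2 ≤ t) (ht2 : t ≤ T) (htS : ∀ s ∈ S, s + 2 ≤ t)
    (x y : ℤ → ℝ) (hxy : inP T L Ldn Cl Cu V Vb x y) :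
    x t ≤ (Vb + η * V) * y t + (Cu - Vb - η * V) * y (t - 1) -
      ∑ s ∈ S, (Cu - Vb - (s : ℝ) * V) * (y (t - s) - y (t - s - 1)) := by
  obtain ⟨hx0, hbin, hup, hdn, hclx, hcux, hru, hrd⟩ := hxy
  have hy0 : ∀ u : ℤ, 1 ≤ u → u ≤ T → 0 ≤ y u := by
    intro u h1 h2; rcases hbin u h1 h2 with h | h <;> rw [h] <;> norm_num
  have hy1 : ∀ u : ℤ, 1 ≤ u → u ≤ T → y u ≤ 1 := by
    intro u h1 h2; rcases hbin u h1 h2 with h | h <;> rw [h] <;> norm_num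
  have hSmem : ∀ s ∈ S, 1 ≤ s ∧ s ≤ L ∧ s ≤ T - 2 ∧ (s : ℝ) * V ≤ Cu - Vb := by
    intro s hs
    have h := Finset.mem_Icc.mp (hS hs)
    refine ⟨h.1, h.2.trans ((min_le_left _ _).trans (min_le_left _ _)),
      h.2.trans ((min_le_left _ _).trans (min_le_right _ _)), ?_⟩
    have hfl : s ≤ ⌊(Cu - Vb) / V⌋ := h.2.trans (min_le_right _ _)
    have h2 : (s : ℝ) ≤ (Cu - Vb) / V := Int.le_floor.mp hfl
    calc (s : ℝ) * V ≤ ((Cu - Vb) / V) * V := mul_le_mul_of_nonneg_right h2 hV.le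
      _ = Cu - Vb := div_mul_cancel₀ _ (ne_of_gt hV)
  have hηV : η * V ≤ Cu - Vb := by
    have h2 : η ≤ (Cu - Vb) / V := hη1.trans (min_le_right _ _)
    calc η * V ≤ ((Cu - Vb) / V) * V := mul_le_mul_of_nonneg_right h2 hV.le
      _ = Cu - Vb := div_mul_cancel₀ _ (ne_of_gt hV)
  have hηL : η ≤ (L : ℝ) := hη1.trans (min_le_left _ _)
  -- startup propagation via min-up constraints
  have hA : ∀ u k : ℤ, 2 ≤ u → u ≤ T → y (u - 1) = 0 → y u = 1 →
      u ≤ k → k ≤ T → k ≤ u + L - 1 → y k = 1 := by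
    intro u k h2 hT' hy' hy'' hk1 hk2 hk3
    have h := hup u k h2 hT' hk1 (le_min hk2 hk3)
    have hk1' : 1 ≤ k := le_trans (by linarith) hk1
    have h1 := hy1 k hk1' hk2
    rw [hy', hy''] at h
    linarith
  by_cases hstart : ∃ s ∈ S, y (t - s) = 1 ∧ y (t - s - 1) = 0
  · obtain ⟨s₀, hs₀S, hy₀, hy₀'⟩ := hstart
    obtain ⟨hs₀1, hs₀L, hs₀T, hs₀V⟩ := hSmem s₀ hs₀S
    have hts₀ : s₀ + 2 ≤ t := htS s₀ hs₀S
    have hyt1 : y (t - 1) = 1 :=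
      hA (t - s₀) (t - 1) (by linarith) (by linarith) hy₀' hy₀
        (by linarith) (by linarith) (by linarith)
    have huniq : ∀ s ∈ S, s ≠ s₀ → ¬(y (t - s) = 1 ∧ y (t - s - 1) = 0) := by
      rintro s hs hne ⟨h1, h2⟩
      obtain ⟨hs1, hsL, hsT, -⟩ := hSmem s hs
      have hts : s + 2 ≤ t := htS s hs
      rcases lt_or_gt_of_ne hne with hlt | hgt
      · have := hA (t - s₀) (t - s - 1) (by linarith) (by linarith) hy₀' hy₀
          (by linarith) (by linarith) (by linarith)
        rw [h2] at this; norm_num at this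
      · have := hA (t - s) (t - s₀ - 1) (by linarith) (by linarith) h2 h1
          (by linarith) (by linarith) (by linarith)
        rw [hy₀'] at this; norm_num at this
    have hterm : ∀ s ∈ S.erase s₀,
        (Cu - Vb - (s : ℝ) * V) * (y (t - s) - y (t - s - 1)) ≤ 0 := by
      intro s hs'
      have hs := Finset.mem_of_mem_erase hs'
      have hne := Finset.ne_of_mem_erase hs'
      obtain ⟨hs1, hsL, hsT, hsV⟩ := hSmem s hs
      have hts : s + 2 ≤ t := htS s hs
      have hc : (0 : ℝ) ≤ Cu - Vb - (s : ℝ) * V := by linarith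
      have hd : y (t - s) - y (t - s - 1) ≤ 0 := by
        rcases hbin (t - s) (by linarith) (by linarith) with h1 | h1
        · have := hy0 (t - s - 1) (by linarith) (by linarith); linarith
        · rcases hbin (t - s - 1) (by linarith) (by linarith) with h2 | h2
          · exact absurd ⟨h1, h2⟩ (huniq s hs hne)
          · rw [h1, h2]; norm_num
      nlinarith [mul_nonneg hc (neg_nonneg.mpr hd)]
    have hsum : ∑ s ∈ S, (Cu - Vb - (s : ℝ) * V) * (y (t - s) - y (t - s - 1)) ≤
        (Cu - Vb - (s₀ : ℝ) * V) * (y (t - s₀) - y (t - s₀ - 1)) := by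
      rw [← Finset.add_sum_erase S _ hs₀S]
      have h := Finset.sum_nonpos hterm
      linarith
    rw [hy₀, hy₀'] at hsum
    rcases hbin t (by linarith) ht2 with hyt | hyt
    · -- unit off at t: then s₀ = L
      have hxt0 : x t ≤ 0 := by
        have := hcux t (by linarith) ht2; rw [hyt] at this; linarith
      have hs₀eq : s₀ = L := by
        by_contra hne
        have hlt : s₀ ≤ L - 1 := by omega
        have := hA (t - s₀) t (by linarith) (by linarith) hy₀' hy₀
          (by linarith) ht2 (by linarith)
        rw [hyt] at this; norm_num at this
      have hLV : η * V ≤ (L : ℝ) * V := mul_le_mul_of_nonneg_right hηL hV.le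
      rw [hyt, hyt1]
      rw [hs₀eq] at hsum
      linarith
    · -- unit on at t: ramp chain bound
      have hchain : ∀ n : ℕ, (n : ℤ) ≤ s₀ → x (t - s₀ + n) ≤ Vb + (n : ℝ) * V := by
        intro n
        induction n with
        | zero =>
          intro _
          have h1 : x (t - s₀ - 1) ≤ 0 := by
            have := hcux (t - s₀ - 1) (by linarith) (by linarith)
            rw [hy₀'] at this; linarith
          have h2 := hru (t - s₀) (by linarith) (by linarith)
          rw [hy₀'] at h2
          simp only [Nat.cast_zero, add_zero, zero_mul]
          linarith
        | succ n ih =>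
          intro hn1
          have hn0 : (0 : ℤ) ≤ (n : ℤ) := Int.natCast_nonneg n
          have hn : (n : ℤ) + 1 ≤ s₀ := by exact_mod_cast hn1
          have ihx := ih (by linarith)
          have hyu : y (t - s₀ + (n : ℤ)) = 1 :=
            hA (t - s₀) (t - s₀ + (n : ℤ)) (by linarith) (by linarith) hy₀' hy₀
              (by linarith) (by linarith) (by linarith)
          have he1 : t - s₀ + ((n + 1 : ℕ) : ℤ) = (t - s₀ + (n : ℤ)) + 1 := by
            push_cast; ring
          rw [he1]
          have h2 := hru ((t - s₀ + (n : ℤ)) + 1) (by linarith) (by linarith)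
          have he2 : t - s₀ + (n : ℤ) + 1 - 1 = t - s₀ + (n : ℤ) := by ring
          rw [he2, hyu] at h2
          push_cast
          linarith
      have hnn : (0 : ℤ) ≤ s₀ := by linarith
      have hxt : x t ≤ Vb + (s₀ : ℝ) * V := by
        have h := hchain s₀.toNat (by rw [Int.toNat_of_nonneg hnn])
        rw [Int.toNat_of_nonneg hnn] at h
        have hcast : ((s₀.toNat : ℕ) : ℝ) = (s₀ : ℝ) := by
          rw [← Int.cast_natCast, Int.toNat_of_nonneg hnn]
        rw [hcast] at h
        have he : t - s₀ + s₀ = t := by ring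
        rw [he] at h
        exact h
      rw [hyt, hyt1]
      linarith
  · push_neg at hstart
    have hsum : ∑ s ∈ S, (Cu - Vb - (s : ℝ) * V) * (y (t - s) - y (t - s - 1)) ≤ 0 := by
      apply Finset.sum_nonpos
      intro s hs
      obtain ⟨hs1, hsL, hsT, hsV⟩ := hSmem s hs
      have hts := htS s hs
      have hc : (0 : ℝ) ≤ Cu - Vb - (s : ℝ) * V := by linarith
      have hd : y (t - s) - y (t - s - 1) ≤ 0 := by
        rcases hbin (t - s) (by linarith) (by linarith) with h1 | h1
        · have := hy0 (t - s - 1) (by linarith) (by linarith); linarith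
        · rcases hbin (t - s - 1) (by linarith) (by linarith) with h2 | h2
          · exact absurd h2 (hstart s hs h1)
          · rw [h1, h2]; norm_num
      nlinarith [mul_nonneg hc (neg_nonneg.mpr hd)]
    rcases hbin t (by linarith) ht2 with hyt | hyt
    · have hxt0 : x t ≤ 0 := by
        have := hcux t (by linarith) ht2; rw [hyt] at this; linarith
      have hyt1 := hy0 (t - 1) (by linarith) (by linarith)
      have hyt2 := hy1 (t - 1) (by linarith) (by linarith)
      rw [hyt]
      nlinarith
    · rcases hbin (t - 1) (by linarith) (by linarith) with hyt' | hyt'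
      · have hx1 : x (t - 1) ≤ 0 := by
          have := hcux (t - 1) (by linarith) (by linarith)
          rw [hyt'] at this; linarith
        have h2 := hru t ht1 ht2
        rw [hyt'] at h2
        have hηV0 : 0 ≤ η * V := mul_nonneg hη0 hV.le
        rw [hyt, hyt']
        linarith
      · have hcu := hcux t (by linarith) ht2
        rw [hyt] at hcu
        rw [hyt, hyt']
        linarith
end

section
/- Let S be a finite set of integers with S ⊆ [1, min{L, T−2, ⌊(C̄−V̄)/V⌋}], let η be a real number with 0 ≤ η ≤ min{L, (C̄−V̄)/V}, and let t be an integer with 1 ≤ t ≤ T−1 such that t ≤ T−s−1 for all s ∈ S. Then every (x, y) ∈ P satisfies x_t ≤ (V̄ + η·V)·y_t + (C̄ − V̄ − η·V)·y_{t+1} − Σ_{s∈S} (C̄ − V̄ − s·V)·(y_{t+s} − y_{t+s+1}). -/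
theorem stmt_14 (T L Ldn : ℤ) (Cl Cu V Vb : ℝ)
    (hT : 1 ≤ T) (hL : 1 ≤ L) (hLdn : 1 ≤ Ldn)
    (hCl : 0 < Cl) (hCu : Cl < Cu) (hV : 0 < V)
    (hVVb : Vb + V ≤ Cu) (hVb1 : Cl < Vb) (hVb2 : Vb < Cl + V)
    (S : Finset ℤ)
    (hS : S ⊆ Finset.Icc 1 (min (min L (T - 2)) ⌊(Cu - Vb) / V⌋))
    (η : ℝ) (hη0 : 0 ≤ η) (hη1 : η ≤ min (L : ℝ) ((Cu - Vb) / V))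
    (t : ℤ) (ht1 : 1 ≤ t) (ht2 : t ≤ T - 1) (htS : ∀ s ∈ S, t ≤ T - s - 1)
    (x y : ℤ → ℝ) (hxy : inP T L Ldn Cl Cu V Vb x y) :
    x t ≤ (Vb + η * V) * y t + (Cu - Vb - η * V) * y (t + 1) -
      ∑ s ∈ S, (Cu - Vb - (s : ℝ) * V) * (y (t + s) - y (t + s + 1)) := by
  obtain ⟨hpos, hbin, hup, hdn, hcl, hcu, hru, hrd⟩ := hxy
  have hy01 : ∀ u : ℤ, 1 ≤ u → u ≤ T → 0 ≤ y u ∧ y u ≤ 1 := by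
    intro u h1 h2
    rcases hbin u h1 h2 with h | h <;> rw [h] <;> norm_num
  have hηL : η ≤ (L : ℝ) := le_trans hη1 (min_le_left _ _)
  have hηV : η * V ≤ Cu - Vb := (le_div_iff₀ hV).mp (le_trans hη1 (min_le_right _ _))
  have hSfacts : ∀ s ∈ S, 1 ≤ s ∧ s ≤ L ∧ t + s + 1 ≤ T ∧ (s : ℝ) * V ≤ Cu - Vb := by
    intro s hs
    have h := Finset.mem_Icc.mp (hS hs)
    have h2 := htS s hs
    have hfl : (s : ℝ) ≤ (Cu - Vb) / V :=
      Int.le_floor.mp (le_trans h.2 (min_le_right _ _))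
    exact ⟨h.1, by omega, by omega, (le_div_iff₀ hV).mp hfl⟩
  -- start-up forces the unit to stay on for L periods
  have lemA : ∀ τ k : ℤ, 1 ≤ τ → τ + 1 ≤ T → y τ = 0 → y (τ + 1) = 1 →
      τ + 1 ≤ k → k ≤ T → k ≤ τ + L → y k = 1 := by
    intro τ k h1 h2 h0 hon hk1 hk2 hk3
    have h := hup (τ + 1) k (by omega) h2 hk1 (le_min hk2 (by omega))
    have e : τ + 1 - 1 = τ := by ring
    rw [e, h0, hon] at h
    rcases hbin k (by omega) hk2 with hk | hk
    · rw [hk] at h; norm_num at h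
    · exact hk
  -- between an off period and a later on period there is a start-up
  have lemE : ∀ n : ℕ, ∀ a b : ℤ, b - a = (n : ℤ) → 1 ≤ a → b ≤ T → a < b →
      y a = 0 → y b = 1 → ∃ τ, a ≤ τ ∧ τ < b ∧ y τ = 0 ∧ y (τ + 1) = 1 := by
    intro n
    induction n with
    | zero => intro a b h _ _ hab _ _; omega
    | succ m ih =>
      intro a b hn h1a hbT hab ha hb
      rcases hbin (b - 1) (by omega) (by omega) with h0 | h1
      · refine ⟨b - 1, by omega, by omega, h0, ?_⟩
        have e : b - 1 + 1 = b := by ring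
        rw [e]; exact hb
      · have hab' : a < b - 1 := by
          rcases eq_or_lt_of_le (by omega : a ≤ b - 1) with he | hl
          · rw [← he, ha] at h1; norm_num at h1
          · exact hl
        obtain ⟨τ, h1', h2', h3', h4'⟩ := ih a (b - 1) (by omega) h1a (by omega) hab' ha h1
        exact ⟨τ, h1', by omega, h3', h4'⟩
  -- if the unit is off somewhere in (t, t+s) and on at t+s, it stays on at t+s+1
  have lemC : ∀ s q : ℤ, 1 ≤ s → s ≤ L → t + s + 1 ≤ T → t + 1 ≤ q → q < t + s →
      y q = 0 → y (t + s) = 1 → y (t + s + 1) = 1 := by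
    intro s q hs1 hsL hsT hq1 hq2 hq0 hon
    obtain ⟨τ, hτ1, hτ2, hτ0, hτon⟩ :=
      lemE (t + s - q).toNat q (t + s) (by omega) (by omega) (by omega) hq2 hq0 hon
    exact lemA τ (t + s + 1) (by omega) (by omega) hτ0 hτon (by omega) hsT (by omega)
  rcases hbin t ht1 (by omega) with hyt | hyt <;>
    rcases hbin (t + 1) (by omega) (by omega) with hyt1 | hyt1
  · -- y t = 0, y (t+1) = 0
    have hsum : ∑ s ∈ S, (Cu - Vb - (s : ℝ) * V) * (y (t + s) - y (t + s + 1)) ≤ 0 := by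
      apply Finset.sum_nonpos
      intro s hs
      obtain ⟨hs1, hsL, hsT, hsV⟩ := hSfacts s hs
      have hc : (0 : ℝ) ≤ Cu - Vb - (s : ℝ) * V := by linarith
      rcases hbin (t + s) (by omega) (by omega) with h | h
      · have h2 := (hy01 (t + s + 1) (by omega) (by omega)).1
        nlinarith
      · have hs2 : 2 ≤ s := by
          by_contra hcon
          have he : s = 1 := by omega
          rw [he] at h
          rw [hyt1] at h; norm_num at h
        have h3 := lemC s (t + 1) hs1 hsL hsT (le_refl _) (by omega) hyt1 h
        rw [h, h3]; norm_num
    have hx0 := hcu t ht1 (by omega)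
    rw [hyt] at hx0
    rw [hyt, hyt1]
    linarith
  · -- y t = 0, y (t+1) = 1
    have hx0 := hcu t ht1 (by omega)
    rw [hyt] at hx0
    have hsum : ∑ s ∈ S, (Cu - Vb - (s : ℝ) * V) * (y (t + s) - y (t + s + 1))
        ≤ Cu - Vb - η * V := by
      calc ∑ s ∈ S, (Cu - Vb - (s : ℝ) * V) * (y (t + s) - y (t + s + 1))
          ≤ ∑ s ∈ S, (if s = L then (Cu - Vb - η * V) else 0) := by
            apply Finset.sum_le_sum
            intro s hs
            obtain ⟨hs1, hsL, hsT, hsV⟩ := hSfacts s hs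
            have hc : (0 : ℝ) ≤ Cu - Vb - (s : ℝ) * V := by linarith
            by_cases hsl : s = L
            · rw [if_pos hsl]
              have h1 := (hy01 (t + s) (by omega) (by omega)).2
              have h2 := (hy01 (t + s + 1) (by omega) (by omega)).1
              have hkey : (Cu - Vb - (s : ℝ) * V) * (y (t + s) - y (t + s + 1))
                  ≤ (Cu - Vb - (s : ℝ) * V) * 1 :=
                mul_le_mul_of_nonneg_left (by linarith) hc
              have hcast : ((s : ℤ) : ℝ) = ((L : ℤ) : ℝ) := by rw [hsl]
              have hLV : η * V ≤ (L : ℝ) * V := mul_le_mul_of_nonneg_right hηL hV.le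
              rw [hcast] at hkey ⊢
              linarith
            · rw [if_neg hsl]
              have h1 := lemA t (t + s) ht1 (by omega) hyt hyt1 (by omega) (by omega) (by omega)
              have h2 := lemA t (t + s + 1) ht1 (by omega) hyt hyt1 (by omega) (by omega) (by omega)
              rw [h1, h2]; norm_num
        _ = if L ∈ S then (Cu - Vb - η * V) else 0 := Finset.sum_ite_eq' S L _
        _ ≤ Cu - Vb - η * V := by split <;> linarith
    rw [hyt, hyt1]
    linarith
  · -- y t = 1, y (t+1) = 0
    have hx1 : x t ≤ Vb := by
      have h1 := hrd (t + 1) (by omega) (by omega)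
      have e : t + 1 - 1 = t := by ring
      rw [e, hyt1] at h1
      have h2 := hcu (t + 1) (by omega) (by omega)
      rw [hyt1] at h2
      linarith
    have hsum : ∑ s ∈ S, (Cu - Vb - (s : ℝ) * V) * (y (t + s) - y (t + s + 1)) ≤ 0 := by
      apply Finset.sum_nonpos
      intro s hs
      obtain ⟨hs1, hsL, hsT, hsV⟩ := hSfacts s hs
      have hc : (0 : ℝ) ≤ Cu - Vb - (s : ℝ) * V := by linarith
      rcases hbin (t + s) (by omega) (by omega) with h | h
      · have h2 := (hy01 (t + s + 1) (by omega) (by omega)).1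
        nlinarith
      · have hs2 : 2 ≤ s := by
          by_contra hcon
          have he : s = 1 := by omega
          rw [he] at h
          rw [hyt1] at h; norm_num at h
        have h3 := lemC s (t + 1) hs1 hsL hsT (le_refl _) (by omega) hyt1 h
        rw [h, h3]; norm_num
    have hηV' : (0 : ℝ) ≤ η * V := mul_nonneg hη0 hV.le
    rw [hyt, hyt1]
    linarith
  · -- y t = 1, y (t+1) = 1
    have hxCu := hcu t ht1 (by omega)
    rw [hyt] at hxCu
    by_cases hEx : ∃ s, s ∈ S ∧ y (t + s) = 1 ∧ y (t + s + 1) = 0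
    · obtain ⟨s', hs'S, hs'on, hs'off⟩ := hEx
      obtain ⟨hs1, hsL, hsT, hsV⟩ := hSfacts s' hs'S
      -- the unit is on during [t, t+s']
      have hon : ∀ k : ℤ, 0 ≤ k → k ≤ s' → y (t + k) = 1 := by
        intro k hk0 hks
        rcases eq_or_lt_of_le hk0 with h | h
        · have e : t + k = t := by omega
          rw [e]; exact hyt
        · rcases eq_or_lt_of_le hks with h2 | h2
          · rw [h2]; exact hs'on
          · rcases hbin (t + k) (by omega) (by omega) with h0 | h1
            · exfalso
              have := lemC s' (t + k) hs1 hsL hsT (by omega) (by omega) h0 hs'on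
              rw [this] at hs'off; norm_num at hs'off
            · exact h1
      -- ramp-down telescoping: x (t + s' - n) ≤ Vb + n V
      have tele : ∀ n : ℕ, (n : ℤ) ≤ s' → x (t + s' - (n : ℤ)) ≤ Vb + (n : ℝ) * V := by
        intro n
        induction n with
        | zero =>
          intro _
          have h1 := hrd (t + s' + 1) (by omega) (by omega)
          have e : t + s' + 1 - 1 = t + s' := by ring
          rw [e, hs'off] at h1
          have h2 := hcu (t + s' + 1) (by omega) (by omega)
          rw [hs'off] at h2
          have e2 : t + s' - ((0 : ℕ) : ℤ) = t + s' := by norm_num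
          rw [e2]
          push_cast
          linarith
        | succ m ih =>
          intro hms
          have hms' : ((m : ℤ)) + 1 ≤ s' := by exact_mod_cast hms
          have ihh := ih (by omega)
          have h1 := hrd (t + s' - (m : ℤ)) (by omega) (by omega)
          have hy1 : y (t + s' - (m : ℤ)) = 1 := by
            have := hon (s' - (m : ℤ)) (by omega) (by omega)
            have e : t + (s' - (m : ℤ)) = t + s' - (m : ℤ) := by ring
            rw [e] at this; exact this
          rw [hy1] at h1
          have e : t + s' - ((m + 1 : ℕ) : ℤ) = t + s' - (m : ℤ) - 1 := by push_cast; ring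
          rw [e]
          push_cast
          linarith
      have hxb : x t ≤ Vb + (s' : ℝ) * V := by
        have h := tele s'.toNat (by omega)
        have e : t + s' - (s'.toNat : ℤ) = t := by omega
        rw [e] at h
        have e2 : ((s'.toNat : ℕ) : ℝ) = ((s' : ℤ) : ℝ) := by
          rw [← Int.cast_natCast]
          exact congrArg _ (Int.toNat_of_nonneg (by omega))
        rw [e2] at h
        exact h
      -- at most one shutdown term
      have hsum : ∑ s ∈ S, (Cu - Vb - (s : ℝ) * V) * (y (t + s) - y (t + s + 1))
          ≤ Cu - Vb - (s' : ℝ) * V := by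
        calc ∑ s ∈ S, (Cu - Vb - (s : ℝ) * V) * (y (t + s) - y (t + s + 1))
            ≤ ∑ s ∈ S, (if s = s' then (Cu - Vb - (s' : ℝ) * V) else 0) := by
              apply Finset.sum_le_sum
              intro s hs
              obtain ⟨hq1, hqL, hqT, hqV⟩ := hSfacts s hs
              have hc : (0 : ℝ) ≤ Cu - Vb - (s : ℝ) * V := by linarith
              by_cases hss : s = s'
              · rw [if_pos hss]
                have h1 := (hy01 (t + s) (by omega) (by omega)).2
                have h2 := (hy01 (t + s + 1) (by omega) (by omega)).1
                have hkey : (Cu - Vb - (s : ℝ) * V) * (y (t + s) - y (t + s + 1))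
                    ≤ (Cu - Vb - (s : ℝ) * V) * 1 :=
                  mul_le_mul_of_nonneg_left (by linarith) hc
                have hcast : ((s : ℤ) : ℝ) = ((s' : ℤ) : ℝ) := by rw [hss]
                rw [hcast] at hkey ⊢
                linarith
              · rw [if_neg hss]
                rcases hbin (t + s) (by omega) (by omega) with h | h
                · have h2 := (hy01 (t + s + 1) (by omega) (by omega)).1
                  nlinarith
                · have h3 : y (t + s + 1) = 1 := by
                    rcases lt_or_gt_of_ne hss with hlt | hgt
                    · have := hon (s + 1) (by omega) (by omega)
                      have e : t + (s + 1) = t + s + 1 := by ring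
                      rw [e] at this; exact this
                    · by_cases hse : s = s' + 1
                      · exfalso
                        have e : t + s = t + s' + 1 := by omega
                        rw [e, hs'off] at h; norm_num at h
                      · exact lemC s (t + s' + 1) hq1 hqL hqT (by omega) (by omega) hs'off h
                  rw [h, h3]; norm_num
          _ = if s' ∈ S then (Cu - Vb - (s' : ℝ) * V) else 0 := Finset.sum_ite_eq' S s' _
          _ = Cu - Vb - (s' : ℝ) * V := if_pos hs'S
      rw [hyt, hyt1]
      linarith
    · push_neg at hEx
      have hsum : ∑ s ∈ S, (Cu - Vb - (s : ℝ) * V) * (y (t + s) - y (t + s + 1)) ≤ 0 := by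
        apply Finset.sum_nonpos
        intro s hs
        obtain ⟨hs1, hsL, hsT, hsV⟩ := hSfacts s hs
        have hc : (0 : ℝ) ≤ Cu - Vb - (s : ℝ) * V := by linarith
        rcases hbin (t + s) (by omega) (by omega) with h | h
        · have h2 := (hy01 (t + s + 1) (by omega) (by omega)).1
          nlinarith
        · have h3 : y (t + s + 1) = 1 := by
            rcases hbin (t + s + 1) (by omega) (by omega) with h0 | h1
            · exact absurd h0 (hEx s hs h)
            · exact h1
          rw [h, h3]; norm_num
      rw [hyt, hyt1]
      linarith
end
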